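/- arXiv:2201.03962 — 2 statements merged into one kernel-verified Lean document; each statement's English description precedes it below -/
import Mathlib

section
/- Let r < min{m,n}, let X be a nonzero m×n real matrix of rank at most r, and let G be a matrix in the tangent cone to the variety ℝ_{≤r}^{m×n} at X. Then the Frobenius distance from X + G to ℝ_{≤r}^{m×n} is at most (sqrt(rank X) / (2 σ_min(X))) ‖G‖_F², where σ_min(X) is the smallest nonzero singular value of X. -/
open Matrix Filter

attribute [local instance] Matrix.frobeniusNormedAddCommGroup Matrix.frobeniusNormedSpace

/-- The set of projections (nearest points in Frobenius norm) of `X` onto `S`. -/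
def projSet {m n : ℕ} (S : Set (Matrix (Fin m) (Fin n) ℝ)) (X : Matrix (Fin m) (Fin n) ℝ) :
    Set (Matrix (Fin m) (Fin n) ℝ) :=
  {Y | Y ∈ S ∧ dist X Y = Metric.infDist X S}

/-- `svalNat A j` is the `(j+1)`-st largest singular value of `A` (0-based indexing):
the square root of the `(j+1)`-st largest eigenvalue of `Aᴴ * A`. -/
noncomputable def svalNat {m n : ℕ} (A : Matrix (Fin m) (Fin n) ℝ) (j : ℕ) : ℝ :=
  if h : j < n then
    Real.sqrt (((Matrix.isHermitian_conjTranspose_mul_self A).eigenvalues ∘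
      Tuple.sort (Matrix.isHermitian_conjTranspose_mul_self A).eigenvalues) (Fin.rev ⟨j, h⟩))
  else 0

/-- The `Δ`-rank: the number of singular values strictly larger than `Δ`. -/
noncomputable def deltaRank {m n : ℕ} (Δ : ℝ) (A : Matrix (Fin m) (Fin n) ℝ) : ℕ :=
  Set.ncard {j : ℕ | j < min m n ∧ Δ < svalNat A j}

/-- The Bouligand tangent cone to `S` at `X`. -/
def tanCone {m n : ℕ} (S : Set (Matrix (Fin m) (Fin n) ℝ)) (X : Matrix (Fin m) (Fin n) ℝ) :
    Set (Matrix (Fin m) (Fin n) ℝ) :=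
  {V | ∃ t : ℕ → ℝ, ∃ W : ℕ → Matrix (Fin m) (Fin n) ℝ,
    (∀ i, 0 < t i) ∧ Filter.Tendsto t Filter.atTop (nhds 0) ∧
    Filter.Tendsto W Filter.atTop (nhds V) ∧ ∀ i, X + t i • W i ∈ S}

/-- The gradient of `f` at `X`, as a matrix, for the Frobenius inner product. -/
noncomputable def gradMatrix {m n : ℕ} (f : Matrix (Fin m) (Fin n) ℝ → ℝ)
    (X : Matrix (Fin m) (Fin n) ℝ) : Matrix (Fin m) (Fin n) ℝ :=
  fun i j => fderiv ℝ f X (Matrix.single i j 1)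

/-- The Frobenius inner product. -/
def frobInner {m n : ℕ} (A B : Matrix (Fin m) (Fin n) ℝ) : ℝ := ∑ i, ∑ j, A i j * B i j


namespace Stmt7Aux

lemma dot_trans {a b : ℕ} (M : Matrix (Fin a) (Fin b) ℝ) (v : Fin b → ℝ) (w : Fin a → ℝ) :
    w ⬝ᵥ (M *ᵥ v) = (Mᵀ *ᵥ w) ⬝ᵥ v := by
  rw [Matrix.dotProduct_mulVec, Matrix.mulVec_transpose]

/-- quadratic form of `Tᵀ * diagonal d * T`. -/
lemma qf_diag {a b : ℕ} (T : Matrix (Fin a) (Fin b) ℝ) (d : Fin a → ℝ) (v : Fin b → ℝ) :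
    v ⬝ᵥ ((Tᵀ * Matrix.diagonal d * T) *ᵥ v) = ∑ i, d i * ((T *ᵥ v) i)^2 := by
  rw [Matrix.mul_assoc, ← Matrix.mulVec_mulVec, dot_trans, Matrix.transpose_transpose,
    ← Matrix.mulVec_mulVec]
  simp [dotProduct, Matrix.mulVec_diagonal]
  exact Finset.sum_congr rfl fun i _ => by ring

/-- key identity for symmetric idempotents -/
lemma dot_proj {k : ℕ} (P : Matrix (Fin k) (Fin k) ℝ) (hsym : Pᵀ = P) (hidem : P * P = P)
    (v : Fin k → ℝ) : (P *ᵥ v) ⬝ᵥ (P *ᵥ v) = v ⬝ᵥ (P *ᵥ v) := by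
  rw [dot_trans, hsym, Matrix.mulVec_mulVec, hidem]
  exact dotProduct_comm _ _

lemma dot_proj_nonneg {k : ℕ} (P : Matrix (Fin k) (Fin k) ℝ) (hsym : Pᵀ = P)
    (hidem : P * P = P) (v : Fin k → ℝ) : 0 ≤ v ⬝ᵥ (P *ᵥ v) := by
  rw [← dot_proj P hsym hidem]
  exact Finset.sum_nonneg fun i _ => mul_self_nonneg _

lemma dot_proj_le {k : ℕ} (P : Matrix (Fin k) (Fin k) ℝ) (hsym : Pᵀ = P) (hidem : P * P = P)
    (v : Fin k → ℝ) : v ⬝ᵥ (P *ᵥ v) ≤ v ⬝ᵥ v := by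
  have h1 : (1 - P)ᵀ = 1 - P := by
    rw [Matrix.transpose_sub, Matrix.transpose_one, hsym]
  have h2 : (1 - P) * (1 - P) = 1 - P := by
    simp [Matrix.sub_mul, Matrix.mul_sub, hidem]
  have := dot_proj_nonneg (1 - P) h1 h2 v
  rw [Matrix.sub_mulVec, Matrix.one_mulVec, dotProduct_sub] at this
  linarith

lemma norm_eq_sqrt {a b : ℕ} (A : Matrix (Fin a) (Fin b) ℝ) :
    ‖A‖ = Real.sqrt (∑ i, ∑ j, (A i j)^2) := by
  rw [Matrix.frobenius_norm_def, Real.sqrt_eq_rpow]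
  congr 1
  refine Finset.sum_congr rfl fun i _ => Finset.sum_congr rfl fun j _ => ?_
  rw [show (2:ℝ) = ((2:ℕ):ℝ) by norm_num, Real.rpow_natCast]
  simp [sq_abs]

lemma norm_sq_eq {a b : ℕ} (A : Matrix (Fin a) (Fin b) ℝ) :
    ‖A‖^2 = ∑ i, ∑ j, (A i j)^2 := by
  rw [norm_eq_sqrt, Real.sq_sqrt]
  exact Finset.sum_nonneg fun i _ => Finset.sum_nonneg fun j _ => sq_nonneg _

lemma mul_entry_col {a b c : ℕ} (A : Matrix (Fin a) (Fin b) ℝ) (B : Matrix (Fin b) (Fin c) ℝ)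
    (i : Fin a) (j : Fin c) : (A * B) i j = (A *ᵥ (fun k => B k j)) i := rfl

/-- Frobenius operator-type bound from a vector bound. -/
lemma fro_mul_le_of_vec {a b c : ℕ} (A : Matrix (Fin a) (Fin b) ℝ) (C : ℝ) (hC : 0 ≤ C)
    (h : ∀ v : Fin b → ℝ, ∑ i, ((A *ᵥ v) i)^2 ≤ C^2 * ∑ i, (v i)^2)
    (B : Matrix (Fin b) (Fin c) ℝ) : ‖A * B‖ ≤ C * ‖B‖ := by
  have hsq : ‖A * B‖^2 ≤ (C * ‖B‖)^2 := by
    rw [norm_sq_eq, mul_pow, norm_sq_eq, Finset.sum_comm]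
    rw [show ∑ i : Fin b, ∑ j : Fin c, B i j ^ 2 = ∑ j : Fin c, ∑ i : Fin b, B i j ^ 2 from Finset.sum_comm, Finset.mul_sum]
    refine Finset.sum_le_sum fun j _ => ?_
    calc ∑ i, ((A * B) i j)^2 = ∑ i, ((A *ᵥ fun k => B k j) i)^2 := by
          simp only [mul_entry_col]
      _ ≤ C^2 * ∑ i, ((fun k => B k j) i)^2 := h _
      _ = C^2 * ∑ i, (B i j)^2 := rfl
  have h1 : (0:ℝ) ≤ C * ‖B‖ := mul_nonneg hC (norm_nonneg _)
  nlinarith [norm_nonneg (A * B)]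


lemma rank_pos_of_ne_zero {m n : ℕ} {X : Matrix (Fin m) (Fin n) ℝ} (hX0 : X ≠ 0) :
    0 < X.rank := by
  rcases Nat.eq_zero_or_pos X.rank with h | h
  · exfalso
    apply hX0
    have hbot : LinearMap.range X.mulVecLin = ⊥ := Submodule.finrank_eq_zero.mp h
    have hlin : X.mulVecLin = 0 := LinearMap.range_eq_bot.mp hbot
    ext i j
    have := congrFun (congrArg (fun f => f (Pi.single j 1)) (congrArg DFunLike.coe hlin)) i
    simpa [Matrix.mulVecLin, Matrix.mulVec_single] using this
  · exact h


lemma eig_facts {m n : ℕ} (X : Matrix (Fin m) (Fin n) ℝ) (hX0 : X ≠ 0) :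
    0 < svalNat X (X.rank - 1) ∧
    ∀ i, (Matrix.isHermitian_conjTranspose_mul_self X).eigenvalues i ≠ 0 →
      (svalNat X (X.rank - 1))^2 ≤ (Matrix.isHermitian_conjTranspose_mul_self X).eigenvalues i := by
  classical
  set hK := Matrix.isHermitian_conjTranspose_mul_self X with hKdef
  set lam := hK.eigenvalues with hlam
  set st := Tuple.sort lam with hst
  have hnn : ∀ i, 0 ≤ lam i := fun i => Matrix.eigenvalues_conjTranspose_mul_self_nonneg X i
  have hmono : Monotone (lam ∘ ⇑st) := Tuple.monotone_sort lam
  have hrank : X.rank = Fintype.card {i // lam i ≠ 0} := by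
    rw [← Matrix.rank_conjTranspose_mul_self X]
    exact hK.rank_eq_card_non_zero_eigs
  have hrpos : 0 < X.rank := rank_pos_of_ne_zero hX0
  have hrle : X.rank ≤ n := Matrix.rank_le_width X
  have hn : 0 < n := lt_of_lt_of_le hrpos hrle
  -- card of sorted nonzeros
  have hcardmu : (Finset.univ.filter (fun i => lam (st i) ≠ 0)).card = X.rank := by
    rw [hrank]
    rw [Fintype.card_subtype]
    exact Finset.card_nbij (fun i => st i) (fun a ha => by
        simpa using (Finset.mem_filter.mp ha).2)
      (fun a _ b _ hab => st.injective hab)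
      (by
        intro b hb
        refine ⟨st.symm b, ?_, by simp⟩
        simp only [Finset.mem_coe, Finset.mem_filter, Finset.mem_univ, true_and]
        simpa using (Finset.mem_filter.mp hb).2)
  set idx : Fin n := ⟨n - X.rank, by omega⟩ with hidx
  have hsval : svalNat X (X.rank - 1) = Real.sqrt (lam (st idx)) := by
    have hlt : X.rank - 1 < n := by omega
    have hrev : (Fin.rev ⟨X.rank - 1, hlt⟩) = idx := by
      ext
      simp only [Fin.val_rev, hidx]
      omega
    rw [svalNat, dif_pos hlt, hrev]
    rfl
  have hposidx : 0 < lam (st idx) := by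
    rcases lt_or_eq_of_le (hnn (st idx)) with h | h
    · exact h
    · exfalso
      have hsub : (Finset.univ.filter (fun i => lam (st i) ≠ 0)) ⊆ Finset.Ioi idx := by
        intro j hj
        simp only [Finset.mem_filter, Finset.mem_univ, true_and] at hj
        rw [Finset.mem_Ioi]
        by_contra hle
        push_neg at hle
        exact hj (le_antisymm (h ▸ hmono hle) (hnn _))
      have := Finset.card_le_card hsub
      rw [hcardmu, Fin.card_Ioi] at this
      simp only [hidx] at this
      omega
  constructor
  · rw [hsval]; exact Real.sqrt_pos.mpr hposidx
  · intro i hi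
    have hsq : (svalNat X (X.rank - 1))^2 = lam (st idx) := by
      rw [hsval]; exact Real.sq_sqrt (hnn _)
    rw [hsq]
    have heq : lam (st (st.symm i)) = lam i := by simp
    rcases le_or_gt idx (st.symm i) with h | h
    · calc lam (st idx) ≤ lam (st (st.symm i)) := hmono h
        _ = lam i := heq
    · exfalso
      have hsub : Finset.Ici (st.symm i) ⊆ (Finset.univ.filter (fun j => lam (st j) ≠ 0)) := by
        intro k hk
        simp only [Finset.mem_filter, Finset.mem_univ, true_and]
        rw [Finset.mem_Ici] at hk
        have h1 : lam (st (st.symm i)) ≤ lam (st k) := hmono hk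
        rw [heq] at h1
        have h2 : 0 < lam i := lt_of_le_of_ne (hnn i) (Ne.symm hi)
        exact ne_of_gt (lt_of_lt_of_le h2 h1)
      have := Finset.card_le_card hsub
      rw [hcardmu, Fin.card_Ici] at this
      have hlt : (st.symm i : ℕ) < n - X.rank := h
      omega


lemma dot_self_qf {a b : ℕ} (M : Matrix (Fin a) (Fin b) ℝ) (v : Fin b → ℝ) :
    (M *ᵥ v) ⬝ᵥ (M *ᵥ v) = v ⬝ᵥ ((Mᵀ * M) *ᵥ v) := by
  rw [← Matrix.mulVec_mulVec, dot_trans Mᵀ, Matrix.transpose_transpose]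

lemma sand {k : ℕ} (V : Matrix (Fin k) (Fin k) ℝ) (hV : Vᵀ * V = 1) (a b : Fin k → ℝ) :
    (V * Matrix.diagonal a * Vᵀ) * (V * Matrix.diagonal b * Vᵀ)
      = V * Matrix.diagonal (fun i => a i * b i) * Vᵀ := by
  have : (V * Matrix.diagonal a * Vᵀ) * (V * Matrix.diagonal b * Vᵀ)
      = V * (Matrix.diagonal a * (Vᵀ * V) * Matrix.diagonal b) * Vᵀ := by
    simp only [Matrix.mul_assoc]
  rw [this, hV, Matrix.mul_one, Matrix.diagonal_mul_diagonal]

lemma sand' {k : ℕ} (V : Matrix (Fin k) (Fin k) ℝ) (hV : Vᵀ * V = 1) (a b c : Fin k → ℝ)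
    (h : ∀ i, a i * b i = c i) :
    (V * Matrix.diagonal a * Vᵀ) * (V * Matrix.diagonal b * Vᵀ)
      = V * Matrix.diagonal c * Vᵀ := by
  rw [sand V hV, show (fun i => a i * b i) = c from funext h]

lemma pinv_of_spectral {m n : ℕ} (X : Matrix (Fin m) (Fin n) ℝ)
    (V : Matrix (Fin n) (Fin n) ℝ) (lam : Fin n → ℝ) (σ : ℝ)
    (hVV : V * Vᵀ = 1) (hVV' : Vᵀ * V = 1)
    (hspec : Xᵀ * X = V * Matrix.diagonal lam * Vᵀ)
    (hnn : ∀ i, 0 ≤ lam i) (hσpos : 0 < σ)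
    (hσle : ∀ i, lam i ≠ 0 → σ^2 ≤ lam i) :
    ∃ (Xp : Matrix (Fin n) (Fin m) ℝ) (Q : Matrix (Fin n) (Fin n) ℝ)
      (P : Matrix (Fin m) (Fin m) ℝ),
      Qᵀ = Q ∧ Q * Q = Q ∧
      Xp * X = Q ∧ X * Q = X ∧ Q * Xp = Xp ∧
      P * X = X ∧ X * Xp = P ∧
      ∀ v : Fin m → ℝ,
        ∑ i, ((Xp *ᵥ v) i)^2 ≤ (σ⁻¹)^2 * ∑ i, (v i)^2 := by
  classical
  set g : Fin n → ℝ := fun i => if lam i = 0 then 0 else (lam i)⁻¹ with hg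
  set q : Fin n → ℝ := fun i => if lam i = 0 then 0 else 1 with hq
  have hgl : ∀ i, g i * lam i = q i := by
    intro i
    by_cases h : lam i = 0
    · simp [hg, hq, h]
    · simp only [hg, hq, if_neg h]
      exact inv_mul_cancel₀ h
  have hlg : ∀ i, lam i * g i = q i := fun i => by rw [mul_comm]; exact hgl i
  have hqq : ∀ i, q i * q i = q i := by
    intro i; by_cases h : lam i = 0 <;> simp [hq, h]
  have hqg : ∀ i, q i * g i = g i := by
    intro i; by_cases h : lam i = 0 <;> simp [hq, hg, h]
  have hgq : ∀ i, g i * q i = g i := by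
    intro i; by_cases h : lam i = 0 <;> simp [hq, hg, h]
  have hgg0 : ∀ i, (q i - 1) * (lam i * (q i - 1)) = 0 := by
    intro i; by_cases h : lam i = 0 <;> simp [hq, h]
  have hKpK : (V * Matrix.diagonal g * Vᵀ) * (Xᵀ * X) = V * Matrix.diagonal q * Vᵀ := by
    rw [hspec]; exact sand' V hVV' g lam q hgl
  have hQKp : (V * Matrix.diagonal q * Vᵀ) * (V * Matrix.diagonal g * Vᵀ)
      = V * Matrix.diagonal g * Vᵀ := sand' V hVV' q g g hqg
  have hQQ : (V * Matrix.diagonal q * Vᵀ) * (V * Matrix.diagonal q * Vᵀ)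
      = V * Matrix.diagonal q * Vᵀ := sand' V hVV' q q q hqq
  have hdsym : ∀ d : Fin n → ℝ, (V * Matrix.diagonal d * Vᵀ)ᵀ = V * Matrix.diagonal d * Vᵀ := by
    intro d
    rw [Matrix.transpose_mul, Matrix.transpose_mul, Matrix.transpose_transpose,
      Matrix.diagonal_transpose, Matrix.mul_assoc]
  have hQsym : (V * Matrix.diagonal q * Vᵀ)ᵀ = V * Matrix.diagonal q * Vᵀ := hdsym q
  have hKpsym : (V * Matrix.diagonal g * Vᵀ)ᵀ = V * Matrix.diagonal g * Vᵀ := hdsym g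
  -- X * Q = X
  have hQone : V * Matrix.diagonal q * Vᵀ - 1 = V * Matrix.diagonal (fun i => q i - 1) * Vᵀ := by
    have h1 : (1 : Matrix (Fin n) (Fin n) ℝ) = V * Matrix.diagonal (fun _ => (1:ℝ)) * Vᵀ := by
      rw [show Matrix.diagonal (fun _ => (1:ℝ)) = (1 : Matrix (Fin n) (Fin n) ℝ) from
        Matrix.diagonal_one, Matrix.mul_one, hVV]
    conv_lhs => rw [h1]
    rw [← Matrix.sub_mul, ← Matrix.mul_sub, Matrix.diagonal_sub]
  have hXQ : X * (V * Matrix.diagonal q * Vᵀ) = X := by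
    have hz : (X * (V * Matrix.diagonal q * Vᵀ - 1))ᴴ * (X * (V * Matrix.diagonal q * Vᵀ - 1))
        = 0 := by
      rw [Matrix.conjTranspose_eq_transpose_of_trivial, Matrix.transpose_mul]
      rw [show (V * Matrix.diagonal q * Vᵀ - 1)ᵀ * Xᵀ * (X * (V * Matrix.diagonal q * Vᵀ - 1))
          = (V * Matrix.diagonal q * Vᵀ - 1)ᵀ * ((Xᵀ * X) * (V * Matrix.diagonal q * Vᵀ - 1))
        from by simp only [Matrix.mul_assoc]]
      rw [Matrix.transpose_sub, Matrix.transpose_one, hQsym, hQone, hspec,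
        sand V hVV' lam (fun i => q i - 1), sand V hVV' (fun i => q i - 1) _]
      rw [show (fun i => (q i - 1) * (lam i * (q i - 1))) = fun _ => (0:ℝ) from funext hgg0]
      rw [show Matrix.diagonal (fun _ => (0:ℝ)) = (0 : Matrix (Fin n) (Fin n) ℝ) from
        Matrix.diagonal_zero]
      rw [Matrix.mul_zero, Matrix.zero_mul]
    have hz2 : X * (V * Matrix.diagonal q * Vᵀ - 1) = 0 :=
      Matrix.conjTranspose_mul_self_eq_zero.mp hz
    rw [Matrix.mul_sub, Matrix.mul_one, sub_eq_zero] at hz2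
    exact hz2
  refine ⟨(V * Matrix.diagonal g * Vᵀ) * Xᵀ, V * Matrix.diagonal q * Vᵀ,
      X * ((V * Matrix.diagonal g * Vᵀ) * Xᵀ), hQsym, hQQ, ?_, hXQ, ?_, ?_, rfl, ?_⟩
  · rw [Matrix.mul_assoc]; exact hKpK
  · rw [← Matrix.mul_assoc, hQKp]
  · -- P * X = X
    calc X * (V * Matrix.diagonal g * Vᵀ * Xᵀ) * X
        = X * ((V * Matrix.diagonal g * Vᵀ) * (Xᵀ * X)) := by simp only [Matrix.mul_assoc]
      _ = X * (V * Matrix.diagonal q * Vᵀ) := by rw [hKpK]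
      _ = X := hXQ
  · -- vector bound
    intro v
    have hPsym : (X * ((V * Matrix.diagonal g * Vᵀ) * Xᵀ))ᵀ
        = X * ((V * Matrix.diagonal g * Vᵀ) * Xᵀ) := by
      rw [Matrix.transpose_mul, Matrix.transpose_mul, Matrix.transpose_transpose, hKpsym,
        Matrix.mul_assoc]
    have hPP : (X * ((V * Matrix.diagonal g * Vᵀ) * Xᵀ)) * (X * ((V * Matrix.diagonal g * Vᵀ) * Xᵀ))
        = X * ((V * Matrix.diagonal g * Vᵀ) * Xᵀ) := by
      calc (X * ((V * Matrix.diagonal g * Vᵀ) * Xᵀ)) * (X * ((V * Matrix.diagonal g * Vᵀ) * Xᵀ))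
          = X * (((V * Matrix.diagonal g * Vᵀ) * (Xᵀ * X)) * ((V * Matrix.diagonal g * Vᵀ) * Xᵀ)) := by
            simp only [Matrix.mul_assoc]
        _ = X * ((V * Matrix.diagonal q * Vᵀ) * ((V * Matrix.diagonal g * Vᵀ) * Xᵀ)) := by
            rw [hKpK]
        _ = X * ((V * Matrix.diagonal g * Vᵀ) * Xᵀ) := by
            rw [← Matrix.mul_assoc (V * Matrix.diagonal q * Vᵀ), hQKp]
    have hXpXp : ((V * Matrix.diagonal g * Vᵀ) * Xᵀ)ᵀ * ((V * Matrix.diagonal g * Vᵀ) * Xᵀ)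
        = (Vᵀ * Xᵀ)ᵀ * Matrix.diagonal (fun i => g i * g i) * (Vᵀ * Xᵀ) := by
      rw [Matrix.transpose_mul, Matrix.transpose_transpose, hKpsym,
        Matrix.transpose_mul, Matrix.transpose_transpose]
      calc X * (V * Matrix.diagonal g * Vᵀ) * ((V * Matrix.diagonal g * Vᵀ) * Xᵀ)
          = X * ((V * Matrix.diagonal g * Vᵀ) * (V * Matrix.diagonal g * Vᵀ)) * Xᵀ := by
            simp only [Matrix.mul_assoc]
        _ = X * (V * Matrix.diagonal (fun i => g i * g i) * Vᵀ) * Xᵀ := by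
            rw [sand V hVV' g g]
        _ = X * Vᵀᵀ * Matrix.diagonal (fun i => g i * g i) * (Vᵀ * Xᵀ) := by
            rw [Matrix.transpose_transpose]; simp only [Matrix.mul_assoc]
        _ = X * Vᵀᵀ * Matrix.diagonal (fun i => g i * g i) * (Vᵀ * Xᵀ) := rfl
    have hPeq : X * ((V * Matrix.diagonal g * Vᵀ) * Xᵀ)
        = (Vᵀ * Xᵀ)ᵀ * Matrix.diagonal g * (Vᵀ * Xᵀ) := by
      rw [Matrix.transpose_mul, Matrix.transpose_transpose, Matrix.transpose_transpose]
      simp only [Matrix.mul_assoc]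
    have step1 : ∑ i, ((((V * Matrix.diagonal g * Vᵀ) * Xᵀ) *ᵥ v) i)^2
        = ∑ i, (g i * g i) * (((Vᵀ * Xᵀ) *ᵥ v) i)^2 := by
      have h1 : ∑ i, ((((V * Matrix.diagonal g * Vᵀ) * Xᵀ) *ᵥ v) i)^2
          = (((V * Matrix.diagonal g * Vᵀ) * Xᵀ) *ᵥ v) ⬝ᵥ (((V * Matrix.diagonal g * Vᵀ) * Xᵀ) *ᵥ v) := by
        simp [dotProduct, pow_two]
      rw [h1, dot_self_qf, hXpXp, qf_diag]
    have step2 : ∑ i, g i * (((Vᵀ * Xᵀ) *ᵥ v) i)^2 ≤ ∑ i, (v i)^2 := by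
      have h2 : v ⬝ᵥ ((X * ((V * Matrix.diagonal g * Vᵀ) * Xᵀ)) *ᵥ v)
          = ∑ i, g i * (((Vᵀ * Xᵀ) *ᵥ v) i)^2 := by
        rw [hPeq, qf_diag]
      have h3 := dot_proj_le _ hPsym hPP v
      rw [h2] at h3
      calc ∑ i, g i * (((Vᵀ * Xᵀ) *ᵥ v) i)^2 ≤ v ⬝ᵥ v := h3
        _ = ∑ i, (v i)^2 := by simp [dotProduct, pow_two]
    have step3 : ∀ i, (g i * g i) * (((Vᵀ * Xᵀ) *ᵥ v) i)^2
        ≤ (σ⁻¹)^2 * (g i * (((Vᵀ * Xᵀ) *ᵥ v) i)^2) := by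
      intro i
      by_cases h : lam i = 0
      · simp [hg, h]
      · have hpos : 0 < lam i := lt_of_le_of_ne (hnn i) (Ne.symm h)
        have hle : σ^2 ≤ lam i := hσle i h
        have hgi : g i = (lam i)⁻¹ := by simp [hg, h]
        rw [hgi]
        have hginv : (lam i)⁻¹ ≤ (σ⁻¹)^2 := by
          rw [inv_pow]
          exact inv_anti₀ (pow_pos hσpos 2) hle
        calc (lam i)⁻¹ * (lam i)⁻¹ * (((Vᵀ * Xᵀ) *ᵥ v) i)^2
            = (lam i)⁻¹ * ((lam i)⁻¹ * (((Vᵀ * Xᵀ) *ᵥ v) i)^2) := by ring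
          _ ≤ (σ⁻¹)^2 * ((lam i)⁻¹ * (((Vᵀ * Xᵀ) *ᵥ v) i)^2) :=
              mul_le_mul_of_nonneg_right hginv (by positivity)
    calc ∑ i, ((((V * Matrix.diagonal g * Vᵀ) * Xᵀ) *ᵥ v) i)^2
        = ∑ i, (g i * g i) * (((Vᵀ * Xᵀ) *ᵥ v) i)^2 := step1
      _ ≤ ∑ i, (σ⁻¹)^2 * (g i * (((Vᵀ * Xᵀ) *ᵥ v) i)^2) := Finset.sum_le_sum fun i _ => step3 i
      _ = (σ⁻¹)^2 * ∑ i, g i * (((Vᵀ * Xᵀ) *ᵥ v) i)^2 := by rw [← Finset.mul_sum]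
      _ ≤ (σ⁻¹)^2 * ∑ i, (v i)^2 :=
          mul_le_mul_of_nonneg_left step2 (sq_nonneg _)

/-- The pseudoinverse package. -/
lemma pinv_package {m n : ℕ} (X : Matrix (Fin m) (Fin n) ℝ) (hX0 : X ≠ 0) :
    ∃ (Xp : Matrix (Fin n) (Fin m) ℝ) (Q : Matrix (Fin n) (Fin n) ℝ)
      (P : Matrix (Fin m) (Fin m) ℝ),
      Qᵀ = Q ∧ Q * Q = Q ∧
      Xp * X = Q ∧ X * Q = X ∧ Q * Xp = Xp ∧
      P * X = X ∧ X * Xp = P ∧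
      0 < svalNat X (X.rank - 1) ∧
      ∀ v : Fin m → ℝ,
        ∑ i, ((Xp *ᵥ v) i)^2 ≤ ((svalNat X (X.rank - 1))⁻¹)^2 * ∑ i, (v i)^2 := by
  classical
  obtain ⟨hσpos, hσle⟩ := eig_facts X hX0
  have hK : (Xᴴ * X).IsHermitian := Matrix.isHermitian_conjTranspose_mul_self X
  have hnn : ∀ i, 0 ≤ (Matrix.isHermitian_conjTranspose_mul_self X).eigenvalues i :=
    fun i => Matrix.eigenvalues_conjTranspose_mul_self_nonneg X i
  set V : Matrix (Fin n) (Fin n) ℝ :=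
    ((Matrix.isHermitian_conjTranspose_mul_self X).eigenvectorUnitary : Matrix (Fin n) (Fin n) ℝ)
    with hV
  have hVt : Vᴴ = Vᵀ := Matrix.conjTranspose_eq_transpose_of_trivial V
  have hVV : V * Vᵀ = 1 := by
    rw [← hVt]
    have h0 := Matrix.mem_unitaryGroup_iff.mp
      ((Matrix.isHermitian_conjTranspose_mul_self X).eigenvectorUnitary).2
    rwa [Matrix.star_eq_conjTranspose] at h0
  have hVV' : Vᵀ * V = 1 := by
    rw [← hVt]
    have h0 := Matrix.mem_unitaryGroup_iff'.mp
      ((Matrix.isHermitian_conjTranspose_mul_self X).eigenvectorUnitary).2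
    rwa [Matrix.star_eq_conjTranspose] at h0
  have hspec : Xᵀ * X
      = V * Matrix.diagonal (Matrix.isHermitian_conjTranspose_mul_self X).eigenvalues * Vᵀ := by
    calc Xᵀ * X = Xᴴ * X := by
          rw [Matrix.conjTranspose_eq_transpose_of_trivial]
      _ = V * Matrix.diagonal
            (RCLike.ofReal ∘ (Matrix.isHermitian_conjTranspose_mul_self X).eigenvalues) * star V :=
          (Matrix.isHermitian_conjTranspose_mul_self X).spectral_theorem
      _ = V * Matrix.diagonal (Matrix.isHermitian_conjTranspose_mul_self X).eigenvalues * Vᵀ := by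
          rw [RCLike.ofReal_real_eq_id, Function.id_comp, Matrix.star_eq_conjTranspose, hVt]
  obtain ⟨Xp, Q, P, h1, h2, h3, h4, h5, h6, h7, h8⟩ :=
    pinv_of_spectral X V (Matrix.isHermitian_conjTranspose_mul_self X).eigenvalues
      (svalNat X (X.rank - 1)) hVV hVV' hspec hnn hσpos hσle
  exact ⟨Xp, Q, P, h1, h2, h3, h4, h5, h6, h7, hσpos, h8⟩


lemma expand_id {m n : ℕ} (X W : Matrix (Fin m) (Fin n) ℝ)
    (A1 P' : Matrix (Fin m) (Fin m) ℝ) (B1 Q' : Matrix (Fin n) (Fin n) ℝ)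
    (hP'X : P' * X = 0) (hXQ' : X * Q' = 0) (t s : ℝ) :
    (1 + A1 + s • P') * (X + t • W) * (1 + B1 + s • Q')
      = X + A1 * X + X * B1 + A1 * X * B1 + (s * s * t) • (P' * W * Q')
        + t • (W + W * B1 + A1 * W + A1 * W * B1)
        + (s * t) • (W * Q' + A1 * (W * Q') + P' * W + P' * (W * B1)) := by
  simp only [Matrix.add_mul, Matrix.mul_add, Matrix.smul_mul, Matrix.mul_smul, hP'X, hXQ',
    Matrix.one_mul, Matrix.mul_one, smul_zero, Matrix.zero_mul, Matrix.mul_zero, add_zero,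
    zero_add, smul_smul, smul_add, Matrix.mul_assoc]
  module

lemma row_pyth {k : ℕ} (Q : Matrix (Fin k) (Fin k) ℝ) (hsym : Qᵀ = Q) (hidem : Q * Q = Q)
    (v : Fin k → ℝ) :
    (∑ j, ((Q *ᵥ v) j)^2) + (∑ j, (v j - (Q *ᵥ v) j)^2) = ∑ j, (v j)^2 := by
  have e1 : ∑ j, ((Q *ᵥ v) j)^2 = (Q *ᵥ v) ⬝ᵥ (Q *ᵥ v) := by
    simp [dotProduct, pow_two]
  have e2 : ∑ j, (v j - (Q *ᵥ v) j)^2 = (v - Q *ᵥ v) ⬝ᵥ (v - Q *ᵥ v) := by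
    simp [dotProduct, pow_two]
  have e3 : ∑ j, (v j)^2 = v ⬝ᵥ v := by simp [dotProduct, pow_two]
  rw [e1, e2, e3, sub_dotProduct, dotProduct_sub, dotProduct_sub,
    dot_proj Q hsym hidem, dotProduct_comm (Q *ᵥ v) v]
  ring

lemma pyth {a b : ℕ} (G : Matrix (Fin a) (Fin b) ℝ) (Q : Matrix (Fin b) (Fin b) ℝ)
    (hsym : Qᵀ = Q) (hidem : Q * Q = Q) :
    ‖G * Q‖^2 + ‖G - G * Q‖^2 = ‖G‖^2 := by
  rw [norm_sq_eq, norm_sq_eq, norm_sq_eq, ← Finset.sum_add_distrib]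
  refine Finset.sum_congr rfl fun i _ => ?_
  have hsymm : ∀ a b, Q a b = Q b a := fun a b =>
    (congrFun (congrFun hsym a) b).symm
  have hrow : ∀ j, (G * Q) i j = (Q *ᵥ (fun k => G i k)) j := by
    intro j
    simp only [Matrix.mul_apply, Matrix.mulVec, dotProduct]
    refine Finset.sum_congr rfl fun k _ => ?_
    rw [hsymm k j]
    ring
  have h := row_pyth Q hsym hidem (fun k => G i k)
  simp only [Matrix.sub_apply, hrow]
  exact h


end Stmt7Aux

open Stmt7Aux

set_option maxHeartbeats 1000000 in
theorem stmt7 {m n r : ℕ} (hr : r < min m n) (X : Matrix (Fin m) (Fin n) ℝ)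
    (hX0 : X ≠ 0) (hXr : X.rank ≤ r) (G : Matrix (Fin m) (Fin n) ℝ)
    (hG : G ∈ tanCone {A : Matrix (Fin m) (Fin n) ℝ | A.rank ≤ r} X) :
    Metric.infDist (X + G) {A : Matrix (Fin m) (Fin n) ℝ | A.rank ≤ r} ≤
      Real.sqrt (X.rank : ℝ) / (2 * svalNat X (X.rank - 1)) * ‖G‖ ^ 2 := by
  classical
  obtain ⟨t, W, htpos, ht0, hWG, hmem⟩ := hG
  obtain ⟨Xp, Q, P, hQsym, hQQ, hXpX, hXQ, hQXp, hPX, hXXp, hσpos, hvec⟩ := pinv_package X hX0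
  set σ := svalNat X (X.rank - 1) with hσdef
  obtain ⟨Q', hQ'⟩ : ∃ Q', Q' = (1 : Matrix (Fin n) (Fin n) ℝ) - Q := ⟨_, rfl⟩
  obtain ⟨P', hP'⟩ : ∃ P', P' = (1 : Matrix (Fin m) (Fin m) ℝ) - P := ⟨_, rfl⟩
  obtain ⟨A1, hA1⟩ : ∃ A1, A1 = G * Xp := ⟨_, rfl⟩
  obtain ⟨B1, hB1⟩ : ∃ B1, B1 = Xp * (G * Q') := ⟨_, rfl⟩
  have hXQ'0 : X * Q' = 0 := by rw [hQ', Matrix.mul_sub, Matrix.mul_one, hXQ, sub_self]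
  have hP'X0 : P' * X = 0 := by rw [hP', Matrix.sub_mul, Matrix.one_mul, hPX, sub_self]
  have hA1X : A1 * X = G * Q := by rw [hA1, Matrix.mul_assoc, hXpX]
  have hXB1 : X * B1 = P * (G * Q') := by rw [hB1, ← Matrix.mul_assoc, hXXp]
  obtain ⟨E, hE⟩ : ∃ E, E = A1 * X * B1 := ⟨_, rfl⟩
  have hGQ' : G * Q' = G - G * Q := by rw [hQ', Matrix.mul_sub, Matrix.mul_one]
  -- bound on E
  have hnE : ‖E‖ ≤ σ⁻¹ * (‖G‖^2 / 2) := by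
    have hEeq : E = (G * Q) * (Xp * (G * Q')) := by
      rw [hE, hA1X, hB1, Matrix.mul_assoc]
    have h2 : ‖E‖ ≤ ‖G * Q‖ * ‖Xp * (G * Q')‖ := by
      rw [hEeq]; exact Matrix.frobenius_norm_mul _ _
    have h1 : ‖Xp * (G * Q')‖ ≤ σ⁻¹ * ‖G * Q'‖ :=
      fro_mul_le_of_vec Xp σ⁻¹ (inv_nonneg.mpr hσpos.le) hvec (G * Q')
    have h3 := pyth G Q hQsym hQQ
    have h4 : ‖G * Q‖ * ‖G - G * Q‖ ≤ ‖G‖^2 / 2 := by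
      nlinarith [sq_nonneg (‖G * Q‖ - ‖G - G * Q‖)]
    calc ‖E‖ ≤ ‖G * Q‖ * ‖Xp * (G * Q')‖ := h2
      _ ≤ ‖G * Q‖ * (σ⁻¹ * ‖G * Q'‖) :=
          mul_le_mul_of_nonneg_left h1 (norm_nonneg _)
      _ = σ⁻¹ * (‖G * Q‖ * ‖G - G * Q‖) := by rw [hGQ']; ring
      _ ≤ σ⁻¹ * (‖G‖^2 / 2) :=
          mul_le_mul_of_nonneg_left h4 (inv_nonneg.mpr hσpos.le)
  -- constants
  obtain ⟨cu, hcu⟩ : ∃ cu, cu = 1 + ‖B1‖ + ‖A1‖ + ‖A1‖ * ‖B1‖ := ⟨_, rfl⟩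
  obtain ⟨cv, hcv⟩ : ∃ cv, cv = ‖Q'‖ + ‖A1‖ * ‖Q'‖ + ‖P'‖ + ‖P'‖ * ‖B1‖ := ⟨_, rfl⟩
  -- per index bound
  have key : ∀ i, Metric.infDist (X + G) {A : Matrix (Fin m) (Fin n) ℝ | A.rank ≤ r}
      ≤ ‖E‖ + (‖P'‖ * ‖Q'‖ * ‖W i - G‖ + t i * (cu * ‖W i‖)
        + Real.sqrt (t i) * (cv * ‖W i‖)) := by
    intro i
    have h0 : 0 < t i := htpos i
    have hs0 : Real.sqrt (t i) ≠ 0 := ne_of_gt (Real.sqrt_pos.mpr h0)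
    set s : ℝ := (Real.sqrt (t i))⁻¹ with hsdef
    have hsst : s * s * t i = 1 := by
      rw [hsdef, show (Real.sqrt (t i))⁻¹ * (Real.sqrt (t i))⁻¹ * t i
          = (Real.sqrt (t i))⁻¹ * (Real.sqrt (t i))⁻¹ * (Real.sqrt (t i) * Real.sqrt (t i))
        from by rw [Real.mul_self_sqrt h0.le]]
      field_simp
    have hst : s * t i = Real.sqrt (t i) := by
      rw [hsdef, show (Real.sqrt (t i))⁻¹ * t i
          = (Real.sqrt (t i))⁻¹ * (Real.sqrt (t i) * Real.sqrt (t i))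
        from by rw [Real.mul_self_sqrt h0.le],
        ← mul_assoc, inv_mul_cancel₀ hs0, one_mul]
    obtain ⟨Y, hY⟩ : ∃ Y, Y = (1 + A1 + s • P') * (X + t i • W i) * (1 + B1 + s • Q') :=
      ⟨_, rfl⟩
    obtain ⟨U, hU⟩ : ∃ U, U = W i + W i * B1 + A1 * W i + A1 * W i * B1 := ⟨_, rfl⟩
    obtain ⟨Vv, hVv⟩ : ∃ Vv, Vv = W i * Q' + A1 * (W i * Q') + P' * W i + P' * (W i * B1) :=
      ⟨_, rfl⟩
    obtain ⟨Z, hZ⟩ : ∃ Z, Z = P' * (G - W i) * Q' := ⟨_, rfl⟩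
    have hYmem : Y ∈ {A : Matrix (Fin m) (Fin n) ℝ | A.rank ≤ r} := by
      have hr1 : Y.rank ≤ ((1 + A1 + s • P') * (X + t i • W i)).rank := by
        rw [hY]; exact Matrix.rank_mul_le_left _ _
      have hr2 : ((1 + A1 + s • P') * (X + t i • W i)).rank ≤ (X + t i • W i).rank :=
        Matrix.rank_mul_le_right _ _
      exact le_trans (le_trans hr1 hr2) (hmem i)
    have hdiff : X + G - Y = Z - E - t i • U - Real.sqrt (t i) • Vv := by
      rw [hY, expand_id X (W i) A1 P' B1 Q' hP'X0 hXQ'0 (t i) s, hsst, one_smul, hst,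
        hU, hVv, hZ, hE]
      have hkey : G - A1 * X - X * B1 = P' * G * Q' := by
        rw [hA1X, hXB1, hP', Matrix.sub_mul, Matrix.one_mul, Matrix.sub_mul,
          Matrix.mul_assoc, hGQ']
      rw [show P' * (G - W i) * Q' = P' * G * Q' - P' * W i * Q' from by
        rw [Matrix.mul_sub, Matrix.sub_mul], ← hkey]
      abel
    have hnu : ‖U‖ ≤ cu * ‖W i‖ := by
      rw [hU]
      have n1 : ‖W i * B1‖ ≤ ‖W i‖ * ‖B1‖ := Matrix.frobenius_norm_mul _ _
      have n2 : ‖A1 * W i‖ ≤ ‖A1‖ * ‖W i‖ := Matrix.frobenius_norm_mul _ _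
      have n3 : ‖A1 * W i * B1‖ ≤ ‖A1‖ * ‖W i‖ * ‖B1‖ :=
        le_trans (Matrix.frobenius_norm_mul _ _)
          (mul_le_mul_of_nonneg_right n2 (norm_nonneg _))
      have n4 : ‖W i + W i * B1 + A1 * W i + A1 * W i * B1‖
          ≤ ‖W i‖ + ‖W i * B1‖ + ‖A1 * W i‖ + ‖A1 * W i * B1‖ := by
        calc ‖W i + W i * B1 + A1 * W i + A1 * W i * B1‖
            ≤ ‖W i + W i * B1 + A1 * W i‖ + ‖A1 * W i * B1‖ := norm_add_le _ _
          _ ≤ ‖W i + W i * B1‖ + ‖A1 * W i‖ + ‖A1 * W i * B1‖ := by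
              have := norm_add_le (W i + W i * B1) (A1 * W i); linarith
          _ ≤ ‖W i‖ + ‖W i * B1‖ + ‖A1 * W i‖ + ‖A1 * W i * B1‖ := by
              have := norm_add_le (W i) (W i * B1); linarith
      rw [hcu]
      nlinarith [norm_nonneg (W i), norm_nonneg A1, norm_nonneg B1]
    have hnv : ‖Vv‖ ≤ cv * ‖W i‖ := by
      rw [hVv]
      have n1 : ‖W i * Q'‖ ≤ ‖W i‖ * ‖Q'‖ := Matrix.frobenius_norm_mul _ _
      have n2 : ‖A1 * (W i * Q')‖ ≤ ‖A1‖ * (‖W i‖ * ‖Q'‖) :=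
        le_trans (Matrix.frobenius_norm_mul _ _)
          (mul_le_mul_of_nonneg_left n1 (norm_nonneg _))
      have n3 : ‖P' * W i‖ ≤ ‖P'‖ * ‖W i‖ := Matrix.frobenius_norm_mul _ _
      have n4 : ‖P' * (W i * B1)‖ ≤ ‖P'‖ * (‖W i‖ * ‖B1‖) :=
        le_trans (Matrix.frobenius_norm_mul _ _)
          (mul_le_mul_of_nonneg_left (Matrix.frobenius_norm_mul _ _) (norm_nonneg _))
      have n5 : ‖W i * Q' + A1 * (W i * Q') + P' * W i + P' * (W i * B1)‖
          ≤ ‖W i * Q'‖ + ‖A1 * (W i * Q')‖ + ‖P' * W i‖ + ‖P' * (W i * B1)‖ := by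
        calc ‖W i * Q' + A1 * (W i * Q') + P' * W i + P' * (W i * B1)‖
            ≤ ‖W i * Q' + A1 * (W i * Q') + P' * W i‖ + ‖P' * (W i * B1)‖ := norm_add_le _ _
          _ ≤ ‖W i * Q' + A1 * (W i * Q')‖ + ‖P' * W i‖ + ‖P' * (W i * B1)‖ := by
              have := norm_add_le (W i * Q' + A1 * (W i * Q')) (P' * W i); linarith
          _ ≤ ‖W i * Q'‖ + ‖A1 * (W i * Q')‖ + ‖P' * W i‖ + ‖P' * (W i * B1)‖ := by
              have := norm_add_le (W i * Q') (A1 * (W i * Q')); linarith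
      rw [hcv]
      nlinarith [norm_nonneg (W i), norm_nonneg A1, norm_nonneg B1, norm_nonneg P',
        norm_nonneg Q']
    have hPGQ : ‖Z‖ ≤ ‖P'‖ * ‖Q'‖ * ‖W i - G‖ := by
      rw [hZ]
      calc ‖P' * (G - W i) * Q'‖ ≤ ‖P' * (G - W i)‖ * ‖Q'‖ := Matrix.frobenius_norm_mul _ _
        _ ≤ ‖P'‖ * ‖G - W i‖ * ‖Q'‖ :=
            mul_le_mul_of_nonneg_right (Matrix.frobenius_norm_mul _ _) (norm_nonneg _)
        _ = ‖P'‖ * ‖Q'‖ * ‖W i - G‖ := by rw [norm_sub_rev]; ring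
    have e1 : ‖t i • U‖ = t i * ‖U‖ := by
      rw [norm_smul, Real.norm_eq_abs, abs_of_pos h0]
    have e2 : ‖Real.sqrt (t i) • Vv‖ = Real.sqrt (t i) * ‖Vv‖ := by
      rw [norm_smul, Real.norm_eq_abs, abs_of_nonneg (Real.sqrt_nonneg (t i))]
    have hnorm : ‖X + G - Y‖ ≤ ‖Z‖ + ‖E‖ + t i * ‖U‖ + Real.sqrt (t i) * ‖Vv‖ := by
      rw [hdiff]
      have d1 := norm_sub_le (Z - E - t i • U) (Real.sqrt (t i) • Vv)
      have d2 := norm_sub_le (Z - E) (t i • U)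
      have d3 := norm_sub_le Z E
      rw [e2] at d1
      rw [e1] at d2
      linarith
    calc Metric.infDist (X + G) {A : Matrix (Fin m) (Fin n) ℝ | A.rank ≤ r}
        ≤ dist (X + G) Y := Metric.infDist_le_dist_of_mem hYmem
      _ = ‖X + G - Y‖ := by rw [dist_eq_norm]
      _ ≤ ‖Z‖ + ‖E‖ + t i * ‖U‖ + Real.sqrt (t i) * ‖Vv‖ := hnorm
      _ ≤ ‖E‖ + (‖P'‖ * ‖Q'‖ * ‖W i - G‖ + t i * (cu * ‖W i‖)
          + Real.sqrt (t i) * (cv * ‖W i‖)) := by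
          have b1 := mul_le_mul_of_nonneg_left hnu h0.le
          have b2 := mul_le_mul_of_nonneg_left hnv (Real.sqrt_nonneg (t i))
          linarith
  -- limits
  have hWsub : Tendsto (fun i => ‖W i - G‖) atTop (nhds 0) := by
    rw [← tendsto_iff_norm_sub_tendsto_zero]
    exact hWG
  have hWn : Tendsto (fun i => ‖W i‖) atTop (nhds ‖G‖) := hWG.norm
  have hsqrt : Tendsto (fun i => Real.sqrt (t i)) atTop (nhds 0) := by
    have := (Real.continuous_sqrt.tendsto 0).comp ht0
    rw [Real.sqrt_zero] at this
    exact this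
  have hf : Tendsto (fun i => ‖E‖ + (‖P'‖ * ‖Q'‖ * ‖W i - G‖ + t i * (cu * ‖W i‖)
      + Real.sqrt (t i) * (cv * ‖W i‖))) atTop
      (nhds (‖E‖ + (‖P'‖ * ‖Q'‖ * 0 + 0 * (cu * ‖G‖) + 0 * (cv * ‖G‖)))) := by
    exact tendsto_const_nhds.add (((hWsub.const_mul (‖P'‖ * ‖Q'‖)).add
      (ht0.mul (hWn.const_mul cu))).add (hsqrt.mul (hWn.const_mul cv)))
  simp only [mul_zero, zero_mul, add_zero, zero_add] at hf
  have hlb : Metric.infDist (X + G) {A : Matrix (Fin m) (Fin n) ℝ | A.rank ≤ r} ≤ ‖E‖ :=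
    ge_of_tendsto hf (Filter.Eventually.of_forall key)
  -- final arithmetic
  have h1r : (1:ℝ) ≤ Real.sqrt (X.rank : ℝ) := by
    have hx : (1:ℝ) ≤ (X.rank : ℝ) := by
      exact_mod_cast rank_pos_of_ne_zero hX0
    calc (1:ℝ) = Real.sqrt 1 := (Real.sqrt_one).symm
      _ ≤ Real.sqrt (X.rank : ℝ) := Real.sqrt_le_sqrt hx
  have h2σ : (0:ℝ) < 2 * σ := by linarith
  calc Metric.infDist (X + G) {A : Matrix (Fin m) (Fin n) ℝ | A.rank ≤ r} ≤ ‖E‖ := hlb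
    _ ≤ σ⁻¹ * (‖G‖^2 / 2) := hnE
    _ = 1 / (2 * σ) * ‖G‖^2 := by ring
    _ ≤ Real.sqrt (X.rank : ℝ) / (2 * σ) * ‖G‖^2 :=
        mul_le_mul_of_nonneg_right ((div_le_div_iff_of_pos_right h2σ).mpr h1r) (sq_nonneg _)
end

section
/- Let r < min{m,n}, let X be an m×n matrix of rank at most r with stationarity measure s_f(X) = ‖G‖ where G is a projection of −∇f(X) onto the tangent cone at X, and let ᾱ > 0. Then for every α ∈ [0, ᾱ] and every Z in the projection of X + αG onto ℝ_{≤r}^{m×n}, one has ‖Z − X‖ ≤ (1 + 1/√2) ᾱ s_f(X) if X ≠ 0, and ‖Z − X‖ ≤ ᾱ s_f(X) if X = 0. -/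
open Matrix Filter

attribute [local instance] Matrix.frobeniusNormedAddCommGroup Matrix.frobeniusNormedSpace

set_option maxHeartbeats 1000000

section AuxSU
variable {m n : ℕ}

lemma matEq {k : ℕ} {A B : Matrix (Fin m) (Fin k) ℝ} (h : ∀ v, A *ᵥ v = B *ᵥ v) : A = B := by
  ext i j
  have := congrFun (h (Pi.single j 1)) i
  simpa using this

/-- Existence of an orthogonal projection onto the range of `X`. -/
lemma exists_proj (X : Matrix (Fin m) (Fin n) ℝ) :
    ∃ P : Matrix (Fin m) (Fin m) ℝ,
      P * P = P ∧ Pᵀ = P ∧ P * X = X ∧ ∀ z, ∃ u, P *ᵥ z = X *ᵥ u := by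
  classical
  set U := LinearMap.range (Matrix.toEuclideanLin X) with hU
  let p : EuclideanSpace ℝ (Fin m) →ₗ[ℝ] EuclideanSpace ℝ (Fin m) :=
    (U.subtypeL.comp (U.orthogonalProjection)).toLinearMap
  have hp : ∀ z, p z = (U.orthogonalProjection z : EuclideanSpace ℝ (Fin m)) := fun z => rfl
  have hmem : ∀ z, p z ∈ U := fun z => (U.orthogonalProjection z).2
  have hfix : ∀ z ∈ U, p z = z := by
    intro z hz
    rw [hp]
    exact congrArg _ (Submodule.orthogonalProjection_mem_subspace_eq_self (K := U) ⟨z, hz⟩)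
  set P : Matrix (Fin m) (Fin m) ℝ := Matrix.toEuclideanLin.symm p with hP
  have key : ∀ z : EuclideanSpace ℝ (Fin m),
      P *ᵥ (WithLp.equiv 2 (Fin m → ℝ) z) = WithLp.equiv 2 (Fin m → ℝ) (p z) := by
    intro z
    have h1 : WithLp.equiv 2 (Fin m → ℝ) (Matrix.toEuclideanLin P z)
        = P *ᵥ WithLp.equiv 2 (Fin m → ℝ) z := rfl
    rw [hP, LinearEquiv.apply_symm_apply] at h1
    exact h1.symm
  have key' : ∀ z : Fin m → ℝ,
      P *ᵥ z = WithLp.equiv 2 (Fin m → ℝ) (p ((WithLp.equiv 2 (Fin m → ℝ)).symm z)) := by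
    intro z
    have := key ((WithLp.equiv 2 (Fin m → ℝ)).symm z)
    rwa [Equiv.apply_symm_apply] at this
  have hXv : ∀ v : Fin n → ℝ, (WithLp.equiv 2 (Fin m → ℝ)).symm (X *ᵥ v)
      = Matrix.toEuclideanLin X ((WithLp.equiv 2 (Fin n → ℝ)).symm v) :=
    fun v => rfl
  refine ⟨P, ?_, ?_, ?_, ?_⟩
  · -- P * P = P
    apply matEq; intro v
    rw [← Matrix.mulVec_mulVec, key' v, key ((p ((WithLp.equiv 2 (Fin m → ℝ)).symm v)))]
    rw [hfix _ (hmem _)]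
  · -- symmetric
    ext i j
    have entry : ∀ (i j : Fin m), P i j = p (EuclideanSpace.single j (1:ℝ)) i := by
      intro i j
      have h2 := key' (Pi.single j 1)
      have h3 : (P *ᵥ Pi.single j 1) i = P i j := by simp
      rw [h2] at h3
      rw [← h3]
      rfl
    rw [Matrix.transpose_apply, entry i j, entry j i]
    have hl : p (EuclideanSpace.single j (1:ℝ)) i
        = inner ℝ (p (EuclideanSpace.single j (1:ℝ))) (EuclideanSpace.single i (1:ℝ)) := by
      rw [EuclideanSpace.inner_single_right]; simp
    have hr : p (EuclideanSpace.single i (1:ℝ)) j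
        = inner ℝ (EuclideanSpace.single j (1:ℝ)) (p (EuclideanSpace.single i (1:ℝ))) := by
      rw [EuclideanSpace.inner_single_left]; simp
    rw [hl, hr, hp, hp]
    exact (Submodule.inner_starProjection_left_eq_right U _ _).symm
  · -- P * X = X
    apply matEq; intro v
    rw [← Matrix.mulVec_mulVec, key' (X *ᵥ v), hXv v]
    rw [hfix _ (LinearMap.mem_range_self _ _)]
    rw [← hXv v, Equiv.apply_symm_apply]
  · -- pointwise range
    intro z
    obtain ⟨w, hw⟩ := hmem ((WithLp.equiv 2 (Fin m → ℝ)).symm z)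
    refine ⟨WithLp.equiv 2 (Fin n → ℝ) w, ?_⟩
    rw [key' z, ← hw]
    have := hXv (WithLp.equiv 2 (Fin n → ℝ) w)
    rw [Equiv.symm_apply_apply] at this
    rw [← this, Equiv.apply_symm_apply]

lemma rank_le_of_pointwise {k : ℕ} (P : Matrix (Fin m) (Fin m) ℝ)
    (X : Matrix (Fin m) (Fin k) ℝ)
    (h : ∀ z, ∃ u, P *ᵥ z = X *ᵥ u) : P.rank ≤ X.rank := by
  apply Submodule.finrank_mono
  rintro y ⟨z, rfl⟩
  obtain ⟨u, hu⟩ := h z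
  exact ⟨u, by simpa using hu.symm⟩

lemma rank_smul_le (c : ℝ) (A : Matrix (Fin m) (Fin n) ℝ) : (c • A).rank ≤ A.rank := by
  have : c • A = (c • (1 : Matrix (Fin m) (Fin m) ℝ)) * A := by
    rw [Matrix.smul_mul, Matrix.one_mul]
  rw [this]
  exact Matrix.rank_mul_le_right _ _

lemma rank_smul_eq {c : ℝ} (hc : c ≠ 0) (A : Matrix (Fin m) (Fin n) ℝ) :
    (c • A).rank = A.rank := by
  refine le_antisymm (rank_smul_le c A) ?_
  have : A = c⁻¹ • (c • A) := by rw [smul_smul, inv_mul_cancel₀ hc, one_smul]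
  conv_lhs => rw [this]
  exact rank_smul_le _ _

lemma rank_add_le (A B : Matrix (Fin m) (Fin n) ℝ) : (A + B).rank ≤ A.rank + B.rank := by
  have hle : LinearMap.range (A + B).mulVecLin ≤
      LinearMap.range A.mulVecLin ⊔ LinearMap.range B.mulVecLin := by
    rintro y ⟨z, rfl⟩
    rw [Matrix.mulVecLin_add]
    exact Submodule.add_mem_sup (LinearMap.mem_range_self _ z) (LinearMap.mem_range_self _ z)
  calc (A + B).rank ≤ Module.finrank ℝ
        (LinearMap.range A.mulVecLin ⊔ LinearMap.range B.mulVecLin : Submodule ℝ (Fin m → ℝ)) :=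
        Submodule.finrank_mono hle
    _ ≤ A.rank + B.rank := Submodule.finrank_add_le_finrank_add_finrank _ _

/-- Lower semicontinuity of rank. -/
lemma rank_le_of_tendsto {k : ℕ} (Θ : ℕ → Matrix (Fin m) (Fin n) ℝ)
    (Θ0 : Matrix (Fin m) (Fin n) ℝ)
    (hT : Tendsto Θ atTop (nhds Θ0)) (hk : ∀ᶠ i in atTop, (Θ i).rank ≤ k) :
    Θ0.rank ≤ k := by
  classical
  set g := Θ0.rank with hg
  set T := Θ0.mulVecLin with hTdef
  set Y := LinearMap.range T with hY
  have hfin : Module.finrank ℝ Y = g := rfl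
  have hgfin : Module.finrank ℝ (Fin g → ℝ) = g := by simp
  obtain ⟨e⟩ : Nonempty ((Fin g → ℝ) ≃ₗ[ℝ] Y) :=
    FiniteDimensional.nonempty_linearEquiv_of_finrank_eq (by rw [hfin, hgfin])
  -- right inverse of range restriction
  obtain ⟨σ, hσ⟩ := (T.rangeRestrict).exists_rightInverse_of_surjective
    (LinearMap.range_rangeRestrict T)
  -- left inverse of the inclusion of Y
  have hinj : LinearMap.ker (Y.subtype ∘ₗ (e : (Fin g → ℝ) →ₗ[ℝ] Y)) = ⊥ := by
    rw [LinearMap.ker_eq_bot]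
    exact Y.injective_subtype.comp e.injective
  obtain ⟨lam, hlam⟩ := LinearMap.exists_leftInverse_of_injective _ hinj
  set L := LinearMap.toMatrix' lam with hL
  set R := LinearMap.toMatrix' (σ ∘ₗ (e : (Fin g → ℝ) →ₗ[ℝ] Y)) with hR
  have htm : ∀ (f : (Fin m → ℝ) →ₗ[ℝ] (Fin g → ℝ)) (v), (LinearMap.toMatrix' f) *ᵥ v = f v := by
    intro f v
    rw [← Matrix.toLin'_apply, Matrix.toLin'_toMatrix']
  have htm2 : ∀ (f : (Fin g → ℝ) →ₗ[ℝ] (Fin n → ℝ)) (v), (LinearMap.toMatrix' f) *ᵥ v = f v := by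
    intro f v
    rw [← Matrix.toLin'_apply, Matrix.toLin'_toMatrix']
  have hLR : L * Θ0 * R = 1 := by
    apply matEq; intro v
    rw [Matrix.mul_assoc, ← Matrix.mulVec_mulVec, ← Matrix.mulVec_mulVec, htm2, Matrix.one_mulVec]
    have h1 : Θ0 *ᵥ ((σ ∘ₗ (e : (Fin g → ℝ) →ₗ[ℝ] Y)) v) = Y.subtype (e v) := by
      rw [LinearMap.comp_apply]
      simp only [LinearEquiv.coe_coe]
      show T (σ (e v)) = _
      have h3 := LinearMap.congr_fun hσ (e v)
      rw [LinearMap.comp_apply, LinearMap.id_apply] at h3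
      calc T (σ (e v)) = Y.subtype (T.rangeRestrict (σ (e v))) := rfl
        _ = Y.subtype (e v) := by rw [h3]
    rw [h1, htm]
    have := LinearMap.congr_fun hlam v
    simpa using this
  -- continuity of the det of L * A * R
  have hcont : Continuous fun A : Matrix (Fin m) (Fin n) ℝ => (L * A * R).det :=
    ((continuous_const.matrix_mul continuous_id).matrix_mul continuous_const).matrix_det
  have hdt : Tendsto (fun i => (L * Θ i * R).det) atTop (nhds ((L * Θ0 * R).det)) :=
    (hcont.tendsto _).comp hT
  rw [hLR, Matrix.det_one] at hdt
  have hev : ∀ᶠ i in atTop, (L * Θ i * R).det ≠ 0 := hdt.eventually_ne one_ne_zero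
  obtain ⟨i, hdet, hrk⟩ := (hev.and hk).exists
  have hunit : IsUnit (L * Θ i * R) := by
    rw [Matrix.isUnit_iff_isUnit_det]
    exact isUnit_iff_ne_zero.mpr hdet
  have : (L * Θ i * R).rank = g := by
    rw [Matrix.rank_of_isUnit _ hunit, Fintype.card_fin]
  calc g = (L * Θ i * R).rank := this.symm
    _ ≤ (Θ i * R).rank := by rw [Matrix.mul_assoc]; exact Matrix.rank_mul_le_right _ _
    _ ≤ (Θ i).rank := Matrix.rank_mul_le_left _ _
    _ ≤ k := hrk

lemma rank_split (M : Matrix (Fin m) (Fin n) ℝ) (A B : Matrix (Fin n) (Fin n) ℝ)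
    (P : Matrix (Fin m) (Fin m) ℝ)
    (hinj : ∀ u, P *ᵥ ((M * A) *ᵥ u) = 0 → A *ᵥ u = 0)
    (hker : P * (M * B) = 0) :
    (M * A).rank + (M * B).rank ≤ M.rank := by
  have h1 : LinearMap.range (M*A).mulVecLin ≤ LinearMap.range M.mulVecLin := by
    rw [Matrix.mulVecLin_mul]; exact LinearMap.range_comp_le_range _ _
  have h2 : LinearMap.range (M*B).mulVecLin ≤ LinearMap.range M.mulVecLin := by
    rw [Matrix.mulVecLin_mul]; exact LinearMap.range_comp_le_range _ _
  have hint : LinearMap.range (M*A).mulVecLin ⊓ LinearMap.range (M*B).mulVecLin = ⊥ := by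
    rw [Submodule.eq_bot_iff]
    rintro y ⟨⟨u, hu⟩, ⟨v, hv⟩⟩
    have hPy : P *ᵥ y = 0 := by
      rw [← hv]
      simp only [Matrix.mulVecLin_apply]
      rw [Matrix.mulVec_mulVec, hker, Matrix.zero_mulVec]
    have hu' : (M*A) *ᵥ u = y := by simpa using hu
    have hAu : A *ᵥ u = 0 := by
      apply hinj u
      rw [hu']
      exact hPy
    rw [← hu']
    rw [← Matrix.mulVec_mulVec, hAu, Matrix.mulVec_zero]
  have := Submodule.finrank_sup_add_finrank_inf_eq
    (LinearMap.range (M*A).mulVecLin) (LinearMap.range (M*B).mulVecLin)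
  rw [hint] at this
  simp only [finrank_bot, add_zero] at this
  calc (M * A).rank + (M * B).rank
      = Module.finrank ℝ (LinearMap.range (M*A).mulVecLin ⊔ LinearMap.range (M*B).mulVecLin :
          Submodule ℝ (Fin m → ℝ)) := this.symm
    _ ≤ M.rank := Submodule.finrank_mono (sup_le h1 h2)

lemma rank_left_le (M : Matrix (Fin m) (Fin n) ℝ) (A : Matrix (Fin n) (Fin n) ℝ)
    (P : Matrix (Fin m) (Fin m) ℝ)
    (hinj : ∀ u, P *ᵥ ((M * A) *ᵥ u) = 0 → A *ᵥ u = 0) :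
    A.rank ≤ (M * A).rank := by
  have hker : LinearMap.ker (M*A).mulVecLin ≤ LinearMap.ker A.mulVecLin := by
    intro u hu
    rw [LinearMap.mem_ker] at hu ⊢
    simp only [Matrix.mulVecLin_apply] at hu ⊢
    exact hinj u (by rw [hu, Matrix.mulVec_zero])
  have e1 := LinearMap.finrank_range_add_finrank_ker (M*A).mulVecLin
  have e2 := LinearMap.finrank_range_add_finrank_ker A.mulVecLin
  have hk := Submodule.finrank_mono hker
  change (M*A).rank + _ = _ at e1
  change A.rank + _ = _ at e2
  omega

lemma norm_sq_eq_frobInner (A : Matrix (Fin m) (Fin n) ℝ) : ‖A‖^2 = frobInner A A := by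
  have hS : (0:ℝ) ≤ ∑ i, ∑ j, ‖A i j‖ ^ (2:ℝ) := by positivity
  rw [Matrix.frobenius_norm_def, ← Real.rpow_natCast (_ ^ (1/2:ℝ)) 2, ← Real.rpow_mul hS]
  norm_num
  unfold frobInner
  congr 1; funext i; congr 1; funext j
  ring

lemma frobInner_eq_trace (A B : Matrix (Fin m) (Fin n) ℝ) :
    frobInner A B = Matrix.trace (Aᵀ * B) := by
  simp only [frobInner, Matrix.trace, Matrix.diag, Matrix.mul_apply, Matrix.transpose_apply]
  rw [Finset.sum_comm]

lemma frobInner_add_left (A B C : Matrix (Fin m) (Fin n) ℝ) :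
    frobInner (A + B) C = frobInner A C + frobInner B C := by
  simp [frobInner, add_mul, Finset.sum_add_distrib]

lemma frobInner_add_right (A B C : Matrix (Fin m) (Fin n) ℝ) :
    frobInner A (B + C) = frobInner A B + frobInner A C := by
  simp [frobInner, mul_add, Finset.sum_add_distrib]

lemma frobInner_comm (A B : Matrix (Fin m) (Fin n) ℝ) : frobInner A B = frobInner B A := by
  simp [frobInner, mul_comm]

lemma pyth_split_left (P : Matrix (Fin m) (Fin m) ℝ) (hP2 : P*P = P) (hPt : Pᵀ = P)
    (A : Matrix (Fin m) (Fin n) ℝ) : ‖A‖^2 = ‖P*A‖^2 + ‖(1-P)*A‖^2 := by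
  have hcross : frobInner (P*A) ((1-P)*A) = 0 := by
    rw [frobInner_eq_trace, Matrix.transpose_mul, Matrix.mul_assoc, ← Matrix.mul_assoc Pᵀ,
      hPt]
    have : P * (1-P) = 0 := by rw [Matrix.mul_sub, Matrix.mul_one, hP2, sub_self]
    rw [this, Matrix.zero_mul, Matrix.mul_zero, Matrix.trace_zero]
  have hA : P*A + (1-P)*A = A := by rw [← Matrix.add_mul]; simp
  calc ‖A‖^2 = frobInner (P*A + (1-P)*A) (P*A + (1-P)*A) := by rw [hA, norm_sq_eq_frobInner]
    _ = frobInner (P*A) (P*A) + frobInner ((1-P)*A) ((1-P)*A)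
        + (frobInner (P*A) ((1-P)*A) + frobInner ((1-P)*A) (P*A)) := by
        rw [frobInner_add_left, frobInner_add_right, frobInner_add_right]; ring
    _ = ‖P*A‖^2 + ‖(1-P)*A‖^2 := by
        rw [frobInner_comm ((1-P)*A) (P*A), hcross, norm_sq_eq_frobInner,
          norm_sq_eq_frobInner]
        ring

lemma pyth_split_right (Q : Matrix (Fin n) (Fin n) ℝ) (hQ2 : Q*Q = Q) (hQt : Qᵀ = Q)
    (A : Matrix (Fin m) (Fin n) ℝ) : ‖A‖^2 = ‖A*Q‖^2 + ‖A*(1-Q)‖^2 := by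
  have hcross : frobInner (A*Q) (A*(1-Q)) = 0 := by
    rw [frobInner_eq_trace, Matrix.transpose_mul, Matrix.mul_assoc,
      Matrix.trace_mul_comm, Matrix.mul_assoc, Matrix.mul_assoc]
    have : (1-Q) * Qᵀ = 0 := by
      rw [hQt, Matrix.sub_mul, Matrix.one_mul, hQ2, sub_self]
    rw [this, Matrix.mul_zero, Matrix.mul_zero, Matrix.trace_zero]
  have hA : A*Q + A*(1-Q) = A := by rw [← Matrix.mul_add]; simp
  calc ‖A‖^2 = frobInner (A*Q + A*(1-Q)) (A*Q + A*(1-Q)) := by rw [hA, norm_sq_eq_frobInner]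
    _ = frobInner (A*Q) (A*Q) + frobInner (A*(1-Q)) (A*(1-Q))
        + (frobInner (A*Q) (A*(1-Q)) + frobInner (A*(1-Q)) (A*Q)) := by
        rw [frobInner_add_left, frobInner_add_right, frobInner_add_right]; ring
    _ = ‖A*Q‖^2 + ‖A*(1-Q)‖^2 := by
        rw [frobInner_comm (A*(1-Q)) (A*Q), hcross, norm_sq_eq_frobInner,
          norm_sq_eq_frobInner]
        ring

lemma pyth_bound (P : Matrix (Fin m) (Fin m) ℝ) (Q : Matrix (Fin n) (Fin n) ℝ)
    (hP2 : P*P = P) (hPt : Pᵀ = P) (hQ2 : Q*Q = Q) (hQt : Qᵀ = Q)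
    (G : Matrix (Fin m) (Fin n) ℝ) :
    ‖(1-P)*G*Q‖^2 + ‖P*G*(1-Q)‖^2 ≤ ‖G‖^2 := by
  have h0 := pyth_split_right Q hQ2 hQt G
  have h1 := pyth_split_left P hP2 hPt (G*Q)
  have h2 := pyth_split_left P hP2 hPt (G*(1-Q))
  have e1 : (1-P)*(G*Q) = (1-P)*G*Q := by rw [Matrix.mul_assoc]
  have e2 : P*(G*(1-Q)) = P*G*(1-Q) := by rw [Matrix.mul_assoc]
  rw [e1] at h1
  rw [e2] at h2
  nlinarith [sq_nonneg ‖P*(G*Q)‖, sq_nonneg ‖(1-P)*(G*(1-Q))‖]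

lemma psd_aux {X : Matrix (Fin m) (Fin n) ℝ} {w : Fin n → ℝ}
    (h : Xᵀ *ᵥ (X *ᵥ w) = 0) : X *ᵥ w = 0 := by
  have h1 : (X *ᵥ w) ⬝ᵥ (X *ᵥ w) = 0 := by
    have : w ⬝ᵥ (Xᵀ *ᵥ (X *ᵥ w)) = 0 := by rw [h]; simp
    rwa [Matrix.dotProduct_mulVec, Matrix.vecMul_transpose] at this
  funext i
  have hnn : ∀ i ∈ Finset.univ, 0 ≤ (X *ᵥ w) i * (X *ᵥ w) i := fun i _ => mul_self_nonneg _
  have := (Finset.sum_eq_zero_iff_of_nonneg hnn).mp h1 i (Finset.mem_univ i)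
  simpa using mul_self_eq_zero.mp this

lemma key_rank_lemma {r : ℕ} (X G : Matrix (Fin m) (Fin n) ℝ)
    (P : Matrix (Fin m) (Fin m) ℝ) (Q : Matrix (Fin n) (Fin n) ℝ)
    (hPt : Pᵀ = P) (hPX : P * X = X) (hPrange : ∀ z, ∃ u, P *ᵥ z = X *ᵥ u)
    (hQt : Qᵀ = Q) (hQ2 : Q * Q = Q) (hXQ : X * Q = X)
    (hQrange : ∀ z, ∃ u, Q *ᵥ z = Xᵀ *ᵥ u)
    (hG : G ∈ tanCone {A : Matrix (Fin m) (Fin n) ℝ | A.rank ≤ r} X) :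
    ((1 - P) * G * (1 - Q)).rank + X.rank ≤ r := by
  obtain ⟨t, W, htpos, ht0, hW, hS⟩ := hG
  -- basic algebra
  have hQXt : Q * Xᵀ = Xᵀ := by
    have h := congrArg Matrix.transpose hXQ
    rwa [Matrix.transpose_mul, hQt] at h
  have hXtP : Xᵀ * P = Xᵀ := by
    have h := congrArg Matrix.transpose hPX
    rwa [Matrix.transpose_mul, hPt] at h
  have hX1Q : X * (1 - Q) = 0 := by rw [Matrix.mul_sub, Matrix.mul_one, hXQ, sub_self]
  have h1QQ : (1 - Q) * Q = 0 := by rw [Matrix.sub_mul, Matrix.one_mul, hQ2, sub_self]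
  have hQ1Q : Q * (1 - Q) = 0 := by rw [Matrix.mul_sub, Matrix.mul_one, hQ2, sub_self]
  set M : ℕ → Matrix (Fin m) (Fin n) ℝ := fun i => X + t i • W i with hM
  set D : ℕ → Matrix (Fin n) (Fin n) ℝ := fun i => Xᵀ * M i * Q + (1 - Q) with hD
  set D0 : Matrix (Fin n) (Fin n) ℝ := Xᵀ * X * Q + (1 - Q) with hD0
  -- commutation for all i
  have hcomm : ∀ i, Q * D i = D i * Q ∧ Q * D i = Xᵀ * M i * Q := by
    intro i
    constructor
    · rw [hD]
      simp only
      rw [Matrix.mul_add, Matrix.add_mul, hQ1Q, h1QQ, ← Matrix.mul_assoc Q, ← Matrix.mul_assoc Q,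
        hQXt, Matrix.mul_assoc (Xᵀ * M i), hQ2]
    · rw [hD]
      simp only
      rw [Matrix.mul_add, hQ1Q, add_zero, ← Matrix.mul_assoc Q, ← Matrix.mul_assoc Q, hQXt]
  -- D0 is invertible
  have hker0 : ∀ v, D0 *ᵥ v = 0 → v = 0 := by
    intro v hv
    have hQv : (Xᵀ * X * Q) *ᵥ v = 0 ∧ (1 - Q) *ᵥ v = 0 := by
      have hq : Q *ᵥ (D0 *ᵥ v) = 0 := by rw [hv, Matrix.mulVec_zero]
      rw [Matrix.mulVec_mulVec] at hq
      have hQD0 : Q * D0 = Xᵀ * X * Q := by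
        rw [hD0, Matrix.mul_add, hQ1Q, add_zero, ← Matrix.mul_assoc Q, ← Matrix.mul_assoc Q, hQXt]
      rw [hQD0] at hq
      constructor
      · exact hq
      · have := hv
        rw [hD0, Matrix.add_mulVec, hq, zero_add] at this
        exact this
    obtain ⟨h1, h2⟩ := hQv
    have hvQ : Q *ᵥ v = v := by
      have := h2
      rw [Matrix.sub_mulVec, Matrix.one_mulVec, sub_eq_zero] at this
      exact this.symm
    obtain ⟨u, hu⟩ := hQrange v
    have hXw : X *ᵥ (Q *ᵥ v) = 0 := by
      apply psd_aux
      rw [Matrix.mulVec_mulVec, Matrix.mulVec_mulVec]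
      exact h1
    rw [hu] at hXw
    have : Xᵀ *ᵥ u = 0 := by
      apply psd_aux (X := Xᵀ)
      rwa [Matrix.transpose_transpose]
    rw [← hvQ, hu, this]
  have hD0unit : IsUnit D0 := by
    rw [← Matrix.mulVec_injective_iff_isUnit]
    intro v w hvw
    have : D0 *ᵥ (v - w) = 0 := by
      rw [Matrix.mulVec_sub]
      rw [show D0.mulVec v = D0.mulVec w from hvw]
      simp
    have := hker0 _ this
    exact sub_eq_zero.mp this
  have hD0det : IsUnit D0.det := (Matrix.isUnit_iff_isUnit_det D0).mp hD0unit
  have hD0detne : D0.det ≠ 0 := hD0det.ne_zero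
  -- commutation of Q with D0 and D0⁻¹
  have hQD0 : Q * D0 = Xᵀ * X * Q := by
    rw [hD0, Matrix.mul_add, hQ1Q, add_zero, ← Matrix.mul_assoc Q, ← Matrix.mul_assoc Q, hQXt]
  have hD0Q : D0 * Q = Xᵀ * X * Q := by
    rw [hD0, Matrix.add_mul, h1QQ, add_zero, Matrix.mul_assoc (Xᵀ * X) Q Q, hQ2]
  have hQcommD0 : Q * D0 = D0 * Q := by rw [hQD0, hD0Q]
  have hQD0inv : Q * D0⁻¹ = D0⁻¹ * Q := by
    calc Q * D0⁻¹ = D0⁻¹ * D0 * Q * D0⁻¹ := by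
          rw [Matrix.nonsing_inv_mul _ hD0det, Matrix.one_mul]
      _ = D0⁻¹ * (D0 * Q) * D0⁻¹ := by rw [Matrix.mul_assoc D0⁻¹ D0 Q]
      _ = D0⁻¹ * (Q * D0) * D0⁻¹ := by rw [hQcommD0]
      _ = D0⁻¹ * Q * (D0 * D0⁻¹) := by
          simp only [← Matrix.mul_assoc]
      _ = D0⁻¹ * Q := by rw [Matrix.mul_nonsing_inv _ hD0det, Matrix.mul_one]
  have hQD0inv1Q : Q * D0⁻¹ * (1 - Q) = 0 := by
    rw [hQD0inv, Matrix.mul_assoc, hQ1Q, Matrix.mul_zero]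
  have hXtXQ : Xᵀ * X * Q = Xᵀ * X := by rw [Matrix.mul_assoc, hXQ]
  have hD0alt : Xᵀ * X = D0 - (1 - Q) := by rw [hD0, hXtXQ]; abel
  have hXc : X * Q * D0⁻¹ * Xᵀ * X = X := by
    have e : X * Q * D0⁻¹ * Xᵀ * X = X * Q * D0⁻¹ * (Xᵀ * X) := by
      rw [Matrix.mul_assoc (X * Q * D0⁻¹) Xᵀ X]
    rw [e, hD0alt, Matrix.mul_sub]
    have e2 : X * Q * D0⁻¹ * D0 = X * Q := by
      rw [Matrix.mul_assoc (X * Q) D0⁻¹ D0, Matrix.nonsing_inv_mul _ hD0det, Matrix.mul_one]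
    have e3 : X * Q * D0⁻¹ * (1 - Q) = 0 := by
      have e4 : X * Q * D0⁻¹ * (1 - Q) = X * (Q * D0⁻¹ * (1 - Q)) := by
        simp only [Matrix.mul_assoc]
      rw [e4, hQD0inv1Q, Matrix.mul_zero]
    rw [e2, e3, sub_zero, hXQ]
  have hproj : X * Q * D0⁻¹ * Xᵀ * P = P := by
    apply matEq; intro z
    obtain ⟨u, hu⟩ := hPrange z
    calc (X * Q * D0⁻¹ * Xᵀ * P) *ᵥ z = (X * Q * D0⁻¹ * Xᵀ) *ᵥ (P *ᵥ z) := by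
          rw [Matrix.mulVec_mulVec]
      _ = (X * Q * D0⁻¹ * Xᵀ) *ᵥ (X *ᵥ u) := by rw [hu]
      _ = (X * Q * D0⁻¹ * Xᵀ * X) *ᵥ u := by rw [Matrix.mulVec_mulVec]
      _ = X *ᵥ u := by rw [hXc]
      _ = P *ᵥ z := hu.symm
  -- convergence facts
  have hMt : Tendsto M atTop (nhds X) := by
    have h1 : Tendsto (fun i => t i • W i) atTop (nhds ((0:ℝ) • G)) := ht0.smul hW
    rw [zero_smul] at h1
    have h2 := (tendsto_const_nhds (x := X) (f := atTop)).add h1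
    rw [add_zero] at h2
    exact h2
  have hDt : Tendsto D atTop (nhds D0) := by
    have hc : Continuous fun A : Matrix (Fin m) (Fin n) ℝ => Xᵀ * A * Q + (1 - Q) :=
      ((continuous_const.matrix_mul continuous_id).matrix_mul continuous_const).add
        continuous_const
    exact ((hc.tendsto X).comp hMt : _)
  have hDinv : Tendsto (fun i => (D i)⁻¹) atTop (nhds D0⁻¹) := by
    have hC : ContinuousAt Inv.inv D0 := by
      apply continuousAt_matrix_inv
      have := NormedRing.inverse_continuousAt hD0det.unit
      rwa [IsUnit.unit_spec] at this
    exact (hC.tendsto).comp hDt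
  have hdetev : ∀ᶠ i in atTop, IsUnit (D i).det := by
    have hdt : Tendsto (fun i => (D i).det) atTop (nhds D0.det) :=
      ((continuous_id.matrix_det).tendsto D0).comp hDt
    exact (hdt.eventually_ne hD0detne).mono (fun i hi => isUnit_iff_ne_zero.mpr hi)
  set Θ : ℕ → Matrix (Fin m) (Fin n) ℝ :=
    fun i => (1 - M i * Q * (D i)⁻¹ * Xᵀ * P) * (W i * (1 - Q)) with hΘ
  set Θ0 : Matrix (Fin m) (Fin n) ℝ := (1 - X * Q * D0⁻¹ * Xᵀ * P) * (G * (1 - Q)) with hΘ0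
  have hΘt : Tendsto Θ atTop (nhds Θ0) := by
    have hpair : Tendsto (fun i => (M i, ((D i)⁻¹, W i))) atTop (nhds (X, (D0⁻¹, G))) :=
      hMt.prodMk_nhds (hDinv.prodMk_nhds hW)
    have hc : Continuous (fun p : Matrix (Fin m) (Fin n) ℝ ×
        (Matrix (Fin n) (Fin n) ℝ × Matrix (Fin m) (Fin n) ℝ) =>
        (1 - p.1 * Q * p.2.1 * Xᵀ * P) * (p.2.2 * (1 - Q))) := by
      have c1 : Continuous (fun p : Matrix (Fin m) (Fin n) ℝ ×
          (Matrix (Fin n) (Fin n) ℝ × Matrix (Fin m) (Fin n) ℝ) =>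
          p.1 * Q * p.2.1 * Xᵀ * P) :=
        (((continuous_fst.matrix_mul continuous_const).matrix_mul
          (continuous_fst.comp continuous_snd)).matrix_mul continuous_const).matrix_mul
          continuous_const
      exact (continuous_const.sub c1).matrix_mul
        ((continuous_snd.comp continuous_snd).matrix_mul continuous_const)
    exact ((hc.tendsto _).comp hpair : _)
  have hΘ0eq : Θ0 = (1 - P) * G * (1 - Q) := by
    rw [hΘ0, hproj, Matrix.mul_assoc]
  -- eventual rank bound
  have hrank_ev : ∀ᶠ i in atTop, (Θ i).rank + X.rank ≤ r := by
    filter_upwards [hdetev] with i hdet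
    set K : Matrix (Fin n) (Fin n) ℝ := 1 - Q * (D i)⁻¹ * Xᵀ * P * M i with hK
    set B : Matrix (Fin n) (Fin n) ℝ := K * (1 - Q) with hB
    have hXtMQ : Xᵀ * M i * Q = D i * Q := by
      rw [← (hcomm i).1, (hcomm i).2]
    -- injectivity
    have hinj : ∀ u, P *ᵥ ((M i * Q) *ᵥ u) = 0 → Q *ᵥ u = 0 := by
      intro u hu
      have hXPMQ : Xᵀ * (P * (M i * Q)) = D i * Q := by
        rw [← Matrix.mul_assoc Xᵀ P, hXtP, ← Matrix.mul_assoc, hXtMQ]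
      have h0 : (D i * Q) *ᵥ u = 0 := by
        rw [← hXPMQ, ← Matrix.mulVec_mulVec, ← Matrix.mulVec_mulVec, hu, Matrix.mulVec_zero]
      have hQu : Q *ᵥ u = ((D i)⁻¹ * (D i * Q)) *ᵥ u := by
        rw [← Matrix.mul_assoc, Matrix.nonsing_inv_mul _ hdet, Matrix.one_mul]
      rw [hQu, ← Matrix.mulVec_mulVec, h0, Matrix.mulVec_zero]
    -- kernel property
    have hXtMK : Xᵀ * M i * K = 0 := by
      rw [hK, Matrix.mul_sub, Matrix.mul_one]
      have e1 : Xᵀ * M i * (Q * (D i)⁻¹ * Xᵀ * P * M i)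
          = Xᵀ * M i * Q * (D i)⁻¹ * Xᵀ * P * M i := by
        simp only [← Matrix.mul_assoc]
      rw [e1, hXtMQ, ← (hcomm i).1, Matrix.mul_assoc Q (D i) (D i)⁻¹,
        Matrix.mul_nonsing_inv _ hdet, Matrix.mul_one, hQXt, hXtP, sub_self]
    have hker : P * (M i * B) = 0 := by
      apply matEq; intro v
      rw [Matrix.zero_mulVec]
      obtain ⟨u, hu⟩ := hPrange ((M i * B) *ᵥ v)
      have hy : (P * (M i * B)) *ᵥ v = X *ᵥ u := by rw [← Matrix.mulVec_mulVec, hu]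
      have hXty : Xᵀ *ᵥ ((P * (M i * B)) *ᵥ v) = 0 := by
        rw [Matrix.mulVec_mulVec]
        have hz : Xᵀ * (P * (M i * B)) = 0 := by
          have e1 : Xᵀ * (P * (M i * B)) = Xᵀ * M i * K * (1 - Q) := by
            rw [← Matrix.mul_assoc Xᵀ P, hXtP, hB]
            simp only [← Matrix.mul_assoc]
          rw [e1, hXtMK, Matrix.zero_mul]
        rw [hz, Matrix.zero_mulVec]
      rw [hy] at hXty ⊢
      exact psd_aux hXty
    -- the scaled identity
    have hM1Q : M i * (1 - Q) = t i • (W i * (1 - Q)) := by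
      show (X + t i • W i) * (1 - Q) = _
      rw [Matrix.add_mul, hX1Q, zero_add, Matrix.smul_mul]
    have hMK : M i * K = M i - (M i * Q * (D i)⁻¹ * Xᵀ * P) * M i := by
      rw [hK, Matrix.mul_sub, Matrix.mul_one]
      congr 1
      simp only [← Matrix.mul_assoc]
    have hMKB : M i * B = t i • Θ i := by
      calc M i * B = (M i * K) * (1 - Q) := by rw [hB, Matrix.mul_assoc]
        _ = M i * (1 - Q) - (M i * Q * (D i)⁻¹ * Xᵀ * P) * (M i * (1 - Q)) := by
            rw [hMK, Matrix.sub_mul, Matrix.mul_assoc (M i * Q * (D i)⁻¹ * Xᵀ * P) (M i) (1 - Q)]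
        _ = t i • (W i * (1 - Q))
            - t i • ((M i * Q * (D i)⁻¹ * Xᵀ * P) * (W i * (1 - Q))) := by
            rw [hM1Q, Matrix.mul_smul]
        _ = t i • Θ i := by
            show _ = t i • ((1 - M i * Q * (D i)⁻¹ * Xᵀ * P) * (W i * (1 - Q)))
            rw [Matrix.sub_mul, Matrix.one_mul, smul_sub]
    have hsplit := rank_split (M i) Q B P hinj hker
    have hQle := rank_left_le (M i) Q P hinj
    have hXQle : X.rank ≤ Q.rank := by
      have := Matrix.rank_mul_le_right X Q
      rwa [hXQ] at this
    have hMir : (M i).rank ≤ r := hS i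
    have hΘr : (M i * B).rank = (Θ i).rank := by
      rw [hMKB, rank_smul_eq (ne_of_gt (htpos i))]
    omega
  -- pass to the limit
  obtain ⟨i0, hi0⟩ := hrank_ev.exists
  have hXr : X.rank ≤ r := le_trans (Nat.le_add_left _ _) hi0
  have hlim := rank_le_of_tendsto (k := r - X.rank) Θ Θ0 hΘt (hrank_ev.mono (fun i hi => by omega))
  rw [← hΘ0eq]
  omega

lemma infDist_bound {r : ℕ} (X G : Matrix (Fin m) (Fin n) ℝ)
    (hG : G ∈ tanCone {A : Matrix (Fin m) (Fin n) ℝ | A.rank ≤ r} X) {α : ℝ} (hα : 0 ≤ α) :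
    Metric.infDist (X + α • G) {A : Matrix (Fin m) (Fin n) ℝ | A.rank ≤ r}
      ≤ α * ((1 / Real.sqrt 2) * ‖G‖) := by
  obtain ⟨P, hP2, hPt, hPX, hPrange⟩ := exists_proj X
  obtain ⟨Q, hQ2, hQt, hQX, hQrange⟩ := exists_proj Xᵀ
  have hXQ : X * Q = X := by
    have h := congrArg Matrix.transpose hQX
    rwa [Matrix.transpose_mul, Matrix.transpose_transpose, hQt] at h
  have hKL := key_rank_lemma X G P Q hPt hPX hPrange hQt hQ2 hXQ hQrange hG
  have hX1Q : X * (1 - Q) = 0 := by rw [Matrix.mul_sub, Matrix.mul_one, hXQ, sub_self]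
  have h1PX : (1 - P) * X = 0 := by rw [Matrix.sub_mul, Matrix.one_mul, hPX, sub_self]
  have h1P1P : (1 - P) * (1 - P) = 1 - P := by
    rw [Matrix.mul_sub, Matrix.mul_one, Matrix.sub_mul, Matrix.one_mul, hP2]
    abel
  have h1Q1Q : (1 - Q) * (1 - Q) = 1 - Q := by
    rw [Matrix.mul_sub, Matrix.mul_one, Matrix.sub_mul, Matrix.one_mul, hQ2]
    abel
  set c1 := ‖(1 - P) * G * Q‖ with hc1
  set c2 := ‖P * G * (1 - Q)‖ with hc2
  -- candidate 1
  have hrankY1 : (X + α • (G - (1 - P) * G * Q)).rank ≤ r := by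
    set Y := X + α • (G - (1 - P) * G * Q) with hY
    have hPY : (P * Y).rank ≤ X.rank :=
      le_trans (Matrix.rank_mul_le_left P Y) (rank_le_of_pointwise P X hPrange)
    have h1PY : (1 - P) * Y = α • ((1 - P) * G * (1 - Q)) := by
      rw [hY, Matrix.mul_add, h1PX, zero_add, Matrix.mul_smul, Matrix.mul_sub]
      congr 1
      rw [← Matrix.mul_assoc, ← Matrix.mul_assoc, h1P1P, Matrix.mul_sub, Matrix.mul_one,
        Matrix.mul_assoc]
    have hsum : P * Y + (1 - P) * Y = Y := by
      rw [← Matrix.add_mul]; simp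
    calc Y.rank = (P * Y + (1 - P) * Y).rank := by rw [hsum]
      _ ≤ (P * Y).rank + ((1 - P) * Y).rank := rank_add_le _ _
      _ ≤ X.rank + ((1 - P) * G * (1 - Q)).rank := by
          refine add_le_add hPY ?_
          rw [h1PY]
          exact rank_smul_le _ _
      _ ≤ r := by omega
  -- candidate 2
  have hrankY2 : (X + α • (G - P * G * (1 - Q))).rank ≤ r := by
    set Y := X + α • (G - P * G * (1 - Q)) with hY
    have hYQ : (Y * Q).rank ≤ X.rank := by
      refine le_trans (Matrix.rank_mul_le_right Y Q) ?_
      have := rank_le_of_pointwise Q Xᵀ hQrange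
      rwa [Matrix.rank_transpose] at this
    have hY1Q : Y * (1 - Q) = α • ((1 - P) * G * (1 - Q)) := by
      rw [hY, Matrix.add_mul, hX1Q, zero_add, Matrix.smul_mul]
      congr 1
      have hPGQQ : P * G * (1 - Q) * (1 - Q) = P * G * (1 - Q) := by
        rw [Matrix.mul_assoc (P * G) (1 - Q) (1 - Q), h1Q1Q]
      rw [Matrix.mul_assoc (1 - P) G (1 - Q), Matrix.sub_mul 1 P (G * (1 - Q)), Matrix.one_mul,
        ← Matrix.mul_assoc P G (1 - Q), Matrix.sub_mul G (P * G * (1 - Q)) (1 - Q), hPGQQ]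
    have hsum : Y * Q + Y * (1 - Q) = Y := by
      rw [← Matrix.mul_add]; simp
    calc Y.rank = (Y * Q + Y * (1 - Q)).rank := by rw [hsum]
      _ ≤ (Y * Q).rank + (Y * (1 - Q)).rank := rank_add_le _ _
      _ ≤ X.rank + ((1 - P) * G * (1 - Q)).rank := by
          refine add_le_add hYQ ?_
          rw [hY1Q]
          exact rank_smul_le _ _
      _ ≤ r := by omega
  -- distances to the two candidates
  have hd1 : dist (X + α • G) (X + α • (G - (1 - P) * G * Q)) = α * c1 := by
    rw [dist_eq_norm]
    have : (X + α • G) - (X + α • (G - (1 - P) * G * Q)) = α • ((1 - P) * G * Q) := by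
      rw [smul_sub]; abel
    rw [this, norm_smul, Real.norm_eq_abs, abs_of_nonneg hα]
  have hd2 : dist (X + α • G) (X + α • (G - P * G * (1 - Q))) = α * c2 := by
    rw [dist_eq_norm]
    have : (X + α • G) - (X + α • (G - P * G * (1 - Q))) = α • (P * G * (1 - Q)) := by
      rw [smul_sub]; abel
    rw [this, norm_smul, Real.norm_eq_abs, abs_of_nonneg hα]
  have hi1 : Metric.infDist (X + α • G) {A : Matrix (Fin m) (Fin n) ℝ | A.rank ≤ r} ≤ α * c1 := by
    rw [← hd1]; exact Metric.infDist_le_dist_of_mem hrankY1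
  have hi2 : Metric.infDist (X + α • G) {A : Matrix (Fin m) (Fin n) ℝ | A.rank ≤ r} ≤ α * c2 := by
    rw [← hd2]; exact Metric.infDist_le_dist_of_mem hrankY2
  -- Pythagoras bound
  have hp := pyth_bound P Q hP2 hPt hQ2 hQt G
  have hmin : min c1 c2 ≤ (1 / Real.sqrt 2) * ‖G‖ := by
    have hmn : (0:ℝ) ≤ min c1 c2 := le_min (norm_nonneg _) (norm_nonneg _)
    have hsq : (min c1 c2)^2 ≤ ‖G‖^2 / 2 := by
      rcases le_total c1 c2 with h | h
      · rw [min_eq_left h]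
        nlinarith [norm_nonneg ((1 - P) * G * Q), norm_nonneg (P * G * (1 - Q))]
      · rw [min_eq_right h]
        nlinarith [norm_nonneg ((1 - P) * G * Q), norm_nonneg (P * G * (1 - Q))]
    have h2 : min c1 c2 ≤ Real.sqrt (‖G‖^2 / 2) := by
      have := Real.sqrt_le_sqrt hsq
      rwa [Real.sqrt_sq hmn] at this
    refine le_trans h2 (le_of_eq ?_)
    rw [Real.sqrt_div (sq_nonneg ‖G‖), Real.sqrt_sq (norm_nonneg G)]
    ring
  rcases le_total c1 c2 with h | h
  · refine le_trans hi1 ?_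
    rw [min_eq_left h] at hmin
    exact mul_le_mul_of_nonneg_left hmin hα
  · refine le_trans hi2 ?_
    rw [min_eq_right h] at hmin
    exact mul_le_mul_of_nonneg_left hmin hα

end AuxSU

theorem stmt17 {m n r : ℕ} (hr : r < min m n) (f : Matrix (Fin m) (Fin n) ℝ → ℝ)
    (X : Matrix (Fin m) (Fin n) ℝ) (hf : DifferentiableAt ℝ f X) (hXr : X.rank ≤ r)
    (G : Matrix (Fin m) (Fin n) ℝ)
    (hG : G ∈ projSet (tanCone {A : Matrix (Fin m) (Fin n) ℝ | A.rank ≤ r} X)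
      (-(gradMatrix f X)))
    (αbar α : ℝ) (hαbar : 0 < αbar) (hα : α ∈ Set.Icc 0 αbar)
    (Z : Matrix (Fin m) (Fin n) ℝ)
    (hZ : Z ∈ projSet {A : Matrix (Fin m) (Fin n) ℝ | A.rank ≤ r} (X + α • G)) :
    (X ≠ 0 → ‖Z - X‖ ≤ (1 + 1 / Real.sqrt 2) * αbar * ‖G‖) ∧
      (X = 0 → ‖Z - X‖ ≤ αbar * ‖G‖) := by
  classical
  obtain ⟨hZr, hZd⟩ := hZ
  obtain ⟨hα0, hα1⟩ := hα
  have hGt : G ∈ tanCone {A : Matrix (Fin m) (Fin n) ℝ | A.rank ≤ r} X := hG.1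
  constructor
  · intro _
    have hles : Metric.infDist (X + α • G) {A : Matrix (Fin m) (Fin n) ℝ | A.rank ≤ r}
        ≤ α * ((1 / Real.sqrt 2) * ‖G‖) := infDist_bound X G hGt hα0
    have h1 : ‖Z - X‖ ≤ ‖Z - (X + α • G)‖ + ‖(X + α • G) - X‖ := by
      have : Z - X = (Z - (X + α • G)) + ((X + α • G) - X) := by abel
      rw [this]; exact norm_add_le _ _
    have h2 : ‖Z - (X + α • G)‖ = Metric.infDist (X + α • G)
        {A : Matrix (Fin m) (Fin n) ℝ | A.rank ≤ r} := by
      rw [← hZd, dist_comm, dist_eq_norm]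
    have h3 : ‖(X + α • G) - X‖ = α * ‖G‖ := by
      rw [add_sub_cancel_left, norm_smul, Real.norm_eq_abs, abs_of_nonneg hα0]
    have hs2 : (0:ℝ) < Real.sqrt 2 := Real.sqrt_pos.mpr (by norm_num)
    have hG0 : (0:ℝ) ≤ ‖G‖ := norm_nonneg G
    have h4 : α * ((1 / Real.sqrt 2) * ‖G‖) + α * ‖G‖ ≤ (1 + 1 / Real.sqrt 2) * αbar * ‖G‖ := by
      have hc : (0:ℝ) ≤ (1 + 1 / Real.sqrt 2) * ‖G‖ := by positivity
      nlinarith [mul_le_mul_of_nonneg_right hα1 hc]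
    calc ‖Z - X‖ ≤ ‖Z - (X + α • G)‖ + ‖(X + α • G) - X‖ := h1
      _ ≤ α * ((1 / Real.sqrt 2) * ‖G‖) + α * ‖G‖ := by rw [h2, h3]; exact add_le_add_left hles _
      _ ≤ (1 + 1 / Real.sqrt 2) * αbar * ‖G‖ := h4
  · intro hX0
    subst hX0
    obtain ⟨t, W, htpos, ht0, hWt, hSm⟩ := hGt
    have hWr : ∀ i, (W i).rank ≤ r := by
      intro i
      have h5 := hSm i
      rw [zero_add] at h5
      have h6 := rank_smul_eq (ne_of_gt (htpos i)) (W i)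
      simp only [Set.mem_setOf_eq] at h5
      omega
    have hGr : G.rank ≤ r := rank_le_of_tendsto W G hWt (Filter.Eventually.of_forall hWr)
    have hαG : (α • G) ∈ {A : Matrix (Fin m) (Fin n) ℝ | A.rank ≤ r} :=
      le_trans (rank_smul_le α G) hGr
    have hinf : Metric.infDist ((0:Matrix (Fin m) (Fin n) ℝ) + α • G)
        {A : Matrix (Fin m) (Fin n) ℝ | A.rank ≤ r} = 0 := by
      rw [zero_add]; exact Metric.infDist_zero_of_mem hαG
    have hdist : dist ((0:Matrix (Fin m) (Fin n) ℝ) + α • G) Z = 0 := by rw [hZd, hinf]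
    have hZeq : Z = (0:Matrix (Fin m) (Fin n) ℝ) + α • G := (dist_eq_zero.mp hdist).symm
    rw [hZeq, zero_add, sub_zero, norm_smul, Real.norm_eq_abs, abs_of_nonneg hα0]
    exact mul_le_mul_of_nonneg_right hα1 (norm_nonneg G)
end
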